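/- arXiv:2110.00905 — 6 statements merged into one kernel-verified Lean document; each statement's English description precedes it below -/
import Mathlib

section
/- For any multiplicative flow f over ℝ on a quantum tensor network with capacities d : E → ℕ_{≥2} satisfying the single-direction condition (for each undirected edge {u,v}, f(u,v) = 1 or f(v,u) = 1) and the capacity constraint 1/d(u,v) ≤ f(u,v), f(v,u) ≤ d(u,v), the value of f is at most the quantum min-cut QMC(N), where QMC(N) is the minimum over all cuts (S̄, T̄) of the product of d over edges crossing the cut. -/
open Finset

/-- The quantum min-cut of a network: the minimum over all cuts `S` (with `s ∈ S`,
`t ∉ S`) of the product of capacities of edges crossing the cut. -/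
noncomputable def QMC {V : Type*} [DecidableEq V] (E : Finset (V × V)) (d : V × V → ℕ) (s t : V) : ℕ :=
  sInf {m : ℕ | ∃ S : Finset V, s ∈ S ∧ t ∉ S ∧
    m = ∏ e ∈ E.filter (fun e => e.1 ∈ S ∧ e.2 ∉ S), d e}

/-- Any multiplicative flow over ℝ on a quantum tensor network
(single-direction condition, capacity constraint, multiplicative conservation)
has value at most the quantum min-cut. -/
theorem real_flow_le_QMC {V : Type*} [DecidableEq V]
    (E : Finset (V × V)) (hsymm : ∀ u v : V, (u, v) ∈ E → (v, u) ∈ E)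
    (d : V × V → ℕ) (hdsymm : ∀ u v : V, d (u, v) = d (v, u))
    (hd2 : ∀ e ∈ E, 2 ≤ d e)
    (s t : V) (hst : s ≠ t)
    (f : V × V → ℝ)
    (hdir : ∀ e ∈ E, f e = 1 ∨ f (e.2, e.1) = 1)
    (hcap : ∀ e ∈ E, 1 / (d e : ℝ) ≤ f e ∧ f e ≤ (d e : ℝ))
    (hcons : ∀ v : V, v ≠ s → v ≠ t →
      ∏ e ∈ E.filter (fun e => e.2 = v), f e = ∏ e ∈ E.filter (fun e => e.1 = v), f e) :
    (∏ e ∈ E.filter (fun e => e.1 = s), f e) / (∏ e ∈ E.filter (fun e => e.2 = s), f e)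
      ≤ (QMC E d s t : ℝ) := by
  classical
  -- positivity of f on E
  have hd0 : ∀ e ∈ E, (0 : ℝ) < (d e : ℝ) := by
    intro e he
    have := hd2 e he
    exact_mod_cast Nat.lt_of_lt_of_le (by norm_num) this
  have hpos : ∀ e ∈ E, 0 < f e := by
    intro e he
    have h1 : (0 : ℝ) < 1 / (d e : ℝ) := by
      have := hd0 e he; positivity
    linarith [(hcap e he).1]
  -- key lemma: for any cut S, value ≤ product of capacities over the cut
  have key : ∀ S : Finset V, s ∈ S → t ∉ S →
      (∏ e ∈ E.filter (fun e => e.1 = s), f e) / (∏ e ∈ E.filter (fun e => e.2 = s), f e)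
        ≤ ((∏ e ∈ E.filter (fun e => e.1 ∈ S ∧ e.2 ∉ S), d e : ℕ) : ℝ) := by
    intro S hsS htS
    -- fiberwise products
    have hfibOut : ∏ v ∈ S, ∏ e ∈ E.filter (fun e => e.1 = v), f e
        = ∏ e ∈ E.filter (fun e => e.1 ∈ S), f e := by
      rw [← Finset.prod_fiberwise_of_maps_to (g := Prod.fst)
        (fun e he => (Finset.mem_filter.mp he).2) f]
      refine Finset.prod_congr rfl (fun v hv => ?_)
      rw [Finset.filter_filter]
      refine Finset.prod_congr (Finset.filter_congr (fun e he => ?_)) (fun _ _ => rfl)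
      constructor
      · intro h; exact ⟨h ▸ hv, h⟩
      · intro h; exact h.2
    have hfibIn : ∏ v ∈ S, ∏ e ∈ E.filter (fun e => e.2 = v), f e
        = ∏ e ∈ E.filter (fun e => e.2 ∈ S), f e := by
      rw [← Finset.prod_fiberwise_of_maps_to (g := Prod.snd)
        (fun e he => (Finset.mem_filter.mp he).2) f]
      refine Finset.prod_congr rfl (fun v hv => ?_)
      rw [Finset.filter_filter]
      refine Finset.prod_congr (Finset.filter_congr (fun e he => ?_)) (fun _ _ => rfl)
      constructor
      · intro h; exact ⟨h ▸ hv, h⟩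
      · intro h; exact h.2
    -- split off the source vertex
    have hOuts : ∏ v ∈ S, ∏ e ∈ E.filter (fun e => e.1 = v), f e
        = (∏ e ∈ E.filter (fun e => e.1 = s), f e) *
          ∏ v ∈ S.erase s, ∏ e ∈ E.filter (fun e => e.1 = v), f e :=
      (Finset.mul_prod_erase S _ hsS).symm
    have hIns : ∏ v ∈ S, ∏ e ∈ E.filter (fun e => e.2 = v), f e
        = (∏ e ∈ E.filter (fun e => e.2 = s), f e) *
          ∏ v ∈ S.erase s, ∏ e ∈ E.filter (fun e => e.2 = v), f e :=
      (Finset.mul_prod_erase S _ hsS).symm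
    have hR : ∏ v ∈ S.erase s, ∏ e ∈ E.filter (fun e => e.2 = v), f e
        = ∏ v ∈ S.erase s, ∏ e ∈ E.filter (fun e => e.1 = v), f e := by
      refine Finset.prod_congr rfl (fun v hv => ?_)
      have hvs : v ≠ s := (Finset.mem_erase.mp hv).1
      have hvt : v ≠ t := fun h => htS (h ▸ (Finset.mem_erase.mp hv).2)
      exact hcons v hvs hvt
    -- positivity of various products
    have hPpos : ∀ (T : Finset (V × V)), T ⊆ E → 0 < ∏ e ∈ T, f e := by
      intro T hT
      exact Finset.prod_pos (fun e he => hpos e (hT he))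
    have hRpos : 0 < ∏ v ∈ S.erase s, ∏ e ∈ E.filter (fun e => e.1 = v), f e :=
      Finset.prod_pos (fun v _ => hPpos _ (Finset.filter_subset _ _))
    -- P / Q = value
    have hPQ : (∏ e ∈ E.filter (fun e => e.1 ∈ S), f e) /
        (∏ e ∈ E.filter (fun e => e.2 ∈ S), f e)
        = (∏ e ∈ E.filter (fun e => e.1 = s), f e) /
          (∏ e ∈ E.filter (fun e => e.2 = s), f e) := by
      rw [← hfibOut, ← hfibIn, hOuts, hIns, hR,
        mul_div_mul_right _ _ (ne_of_gt hRpos)]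
    -- split the products by whether the other endpoint is in S
    have hsplitP : (∏ e ∈ E.filter (fun e => e.1 ∈ S ∧ e.2 ∈ S), f e) *
        (∏ e ∈ E.filter (fun e => e.1 ∈ S ∧ e.2 ∉ S), f e)
        = ∏ e ∈ E.filter (fun e => e.1 ∈ S), f e := by
      rw [← Finset.prod_filter_mul_prod_filter_not (E.filter (fun e => e.1 ∈ S))
        (fun e => e.2 ∈ S) f, Finset.filter_filter, Finset.filter_filter]
    have hsplitQ : (∏ e ∈ E.filter (fun e => e.1 ∈ S ∧ e.2 ∈ S), f e) *
        (∏ e ∈ E.filter (fun e => e.1 ∉ S ∧ e.2 ∈ S), f e)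
        = ∏ e ∈ E.filter (fun e => e.2 ∈ S), f e := by
      rw [← Finset.prod_filter_mul_prod_filter_not (E.filter (fun e => e.2 ∈ S))
        (fun e => e.1 ∈ S) f, Finset.filter_filter, Finset.filter_filter]
      congr 1
      · exact Finset.prod_congr (Finset.filter_congr (fun e _ => and_comm)) (fun _ _ => rfl)
      · exact Finset.prod_congr (Finset.filter_congr (fun e _ => and_comm)) (fun _ _ => rfl)
    -- the anti-cut product equals the cut product of reversed edges
    have hanti : (∏ e ∈ E.filter (fun e => e.1 ∉ S ∧ e.2 ∈ S), f e)
        = ∏ e ∈ E.filter (fun e => e.1 ∈ S ∧ e.2 ∉ S), f (e.2, e.1) := by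
      refine Finset.prod_nbij' (fun e => (e.2, e.1)) (fun e => (e.2, e.1)) ?_ ?_ ?_ ?_ ?_
      · intro e he
        obtain ⟨he, h1, h2⟩ := Finset.mem_filter.mp he
        exact Finset.mem_filter.mpr ⟨hsymm _ _ (by simpa using he), h2, h1⟩
      · intro e he
        obtain ⟨he, h1, h2⟩ := Finset.mem_filter.mp he
        exact Finset.mem_filter.mpr ⟨hsymm _ _ (by simpa using he), h2, h1⟩
      · intro e _; rfl
      · intro e _; rfl
      · intro e _; rfl
    -- each ratio across the cut is bounded by the capacity
    have hbound : ∀ e ∈ E.filter (fun e => e.1 ∈ S ∧ e.2 ∉ S),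
        f e / f (e.2, e.1) ≤ (d e : ℝ) := by
      intro e he
      obtain ⟨heE, -, -⟩ := Finset.mem_filter.mp he
      have heE' : ((e.2, e.1) : V × V) ∈ E := hsymm _ _ (by simpa using heE)
      have hrevpos : 0 < f (e.2, e.1) := hpos _ heE'
      have hde : d (e.2, e.1) = d e := by
        rw [← hdsymm e.1 e.2]
      rcases hdir e heE with h1 | h1
      · rw [h1, div_le_iff₀ hrevpos]
        have hc := (hcap _ heE').1
        rw [hde] at hc
        rw [div_le_iff₀ (hd0 e heE)] at hc
        linarith [mul_comm (f (e.2, e.1)) ((d e : ℝ))]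
      · rw [h1, div_one]
        exact (hcap e heE).2
    -- nonnegativity of ratios
    have hnn : ∀ e ∈ E.filter (fun e => e.1 ∈ S ∧ e.2 ∉ S),
        0 ≤ f e / f (e.2, e.1) := by
      intro e he
      obtain ⟨heE, -, -⟩ := Finset.mem_filter.mp he
      have heE' : ((e.2, e.1) : V × V) ∈ E := hsymm _ _ (by simpa using heE)
      exact le_of_lt (div_pos (hpos e heE) (hpos _ heE'))
    have hCpos : 0 < ∏ e ∈ E.filter (fun e => e.1 ∈ S ∧ e.2 ∈ S), f e :=
      hPpos _ (Finset.filter_subset _ _)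
    calc (∏ e ∈ E.filter (fun e => e.1 = s), f e) / (∏ e ∈ E.filter (fun e => e.2 = s), f e)
        = (∏ e ∈ E.filter (fun e => e.1 ∈ S), f e) /
          (∏ e ∈ E.filter (fun e => e.2 ∈ S), f e) := hPQ.symm
      _ = (∏ e ∈ E.filter (fun e => e.1 ∈ S ∧ e.2 ∉ S), f e) /
          (∏ e ∈ E.filter (fun e => e.1 ∉ S ∧ e.2 ∈ S), f e) := by
          rw [← hsplitP, ← hsplitQ, mul_div_mul_left _ _ (ne_of_gt hCpos)]
      _ = ∏ e ∈ E.filter (fun e => e.1 ∈ S ∧ e.2 ∉ S), f e / f (e.2, e.1) := by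
          rw [hanti, ← Finset.prod_div_distrib]
      _ ≤ ∏ e ∈ E.filter (fun e => e.1 ∈ S ∧ e.2 ∉ S), (d e : ℝ) :=
          Finset.prod_le_prod hnn hbound
      _ = ((∏ e ∈ E.filter (fun e => e.1 ∈ S ∧ e.2 ∉ S), d e : ℕ) : ℝ) := by
          rw [Nat.cast_prod]
  -- the defining set of QMC is nonempty
  have hne : {m : ℕ | ∃ S : Finset V, s ∈ S ∧ t ∉ S ∧
      m = ∏ e ∈ E.filter (fun e => e.1 ∈ S ∧ e.2 ∉ S), d e}.Nonempty := by
    refine ⟨_, {s}, Finset.mem_singleton_self s, ?_, rfl⟩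
    simp [Finset.mem_singleton]
    exact fun h => hst h.symm
  obtain ⟨S, hsS, htS, hQ⟩ := Nat.sInf_mem hne
  have : QMC E d s t = ∏ e ∈ E.filter (fun e => e.1 ∈ S ∧ e.2 ∉ S), d e := hQ
  rw [this]
  exact key S hsS htS
end

section
/- If f is a multiplicative flow over ℝ on a quantum tensor network N whose value equals the quantum min-cut QMC(N), then for every minimum cut (S̄, T̄) and every edge {u,v} of the cut set with u ∈ S̄ and v ∈ T̄, one has f(u,v) = d(u,v) (equivalently the flow fully saturates in the forward direction: f(u,v)/f(v,u) = d(u,v)). -/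
open Finset

lemma prod_eq_forall_eq {ι : Type*} (s : Finset ι) (r b : ι → ℝ)
    (hpos : ∀ i ∈ s, 0 < r i) (hle : ∀ i ∈ s, r i ≤ b i)
    (heq : ∏ i ∈ s, r i = ∏ i ∈ s, b i) : ∀ i ∈ s, r i = b i := by
  intro i hi
  by_contra hne
  have hlt : r i < b i := lt_of_le_of_ne (hle i hi) hne
  exact absurd heq (ne_of_lt (Finset.prod_lt_prod hpos hle ⟨i, hi, hlt⟩))

/-- If a multiplicative flow over ℝ has value equal to the quantum
min-cut, then across every minimum cut, every crossing edge is fully saturated in the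
forward direction: `f(u,v)/f(v,u) = d(u,v)`. -/
theorem saturating_flow_on_min_cut {V : Type*} [DecidableEq V]
    (E : Finset (V × V)) (hsymm : ∀ u v : V, (u, v) ∈ E → (v, u) ∈ E)
    (d : V × V → ℕ) (hdsymm : ∀ u v : V, d (u, v) = d (v, u))
    (hd2 : ∀ e ∈ E, 2 ≤ d e)
    (s t : V) (hst : s ≠ t)
    (f : V × V → ℝ)
    (hdir : ∀ e ∈ E, f e = 1 ∨ f (e.2, e.1) = 1)
    (hcap : ∀ e ∈ E, 1 / (d e : ℝ) ≤ f e ∧ f e ≤ (d e : ℝ))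
    (hcons : ∀ v : V, v ≠ s → v ≠ t →
      ∏ e ∈ E.filter (fun e => e.2 = v), f e = ∏ e ∈ E.filter (fun e => e.1 = v), f e)
    (hval : (∏ e ∈ E.filter (fun e => e.1 = s), f e) /
        (∏ e ∈ E.filter (fun e => e.2 = s), f e) = (QMC E d s t : ℝ)) :
    ∀ S : Finset V, s ∈ S → t ∉ S →
      (∏ e ∈ E.filter (fun e => e.1 ∈ S ∧ e.2 ∉ S), d e) = QMC E d s t →
      ∀ u v : V, (u, v) ∈ E → u ∈ S → v ∉ S →
        f (u, v) / f (v, u) = (d (u, v) : ℝ) := by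
  intro S hsS htS hmin u v huvE huS hvS
  -- positivity of f on E
  have hfpos : ∀ e ∈ E, 0 < f e := by
    intro e he
    have h1 : (0:ℝ) < 1 / (d e : ℝ) := by
      have : (0:ℝ) < (d e : ℝ) := by exact_mod_cast lt_of_lt_of_le (by norm_num) (hd2 e he)
      positivity
    exact lt_of_lt_of_le h1 (hcap e he).1
  classical
  -- Step 1: value across source = value across cut S
  set P1 := ∏ e ∈ E.filter (fun e => e.1 ∈ S), f e with hP1
  set P2 := ∏ e ∈ E.filter (fun e => e.2 ∈ S), f e with hP2
  have hP1split : P1 = ∏ x ∈ S, ∏ e ∈ E.filter (fun e => e.1 = x), f e := by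
    rw [hP1, ← Finset.prod_fiberwise_of_maps_to (g := Prod.fst)
      (fun e he => (Finset.mem_filter.mp he).2)]
    apply Finset.prod_congr rfl
    intro x hx
    apply Finset.prod_congr _ (fun _ _ => rfl)
    rw [Finset.filter_filter]
    apply Finset.filter_congr
    intro e he
    exact ⟨fun h => h.2, fun h => ⟨h ▸ hx, h⟩⟩
  have hP2split : P2 = ∏ x ∈ S, ∏ e ∈ E.filter (fun e => e.2 = x), f e := by
    rw [hP2, ← Finset.prod_fiberwise_of_maps_to (g := Prod.snd)
      (fun e he => (Finset.mem_filter.mp he).2)]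
    apply Finset.prod_congr rfl
    intro x hx
    apply Finset.prod_congr _ (fun _ _ => rfl)
    rw [Finset.filter_filter]
    apply Finset.filter_congr
    intro e he
    exact ⟨fun h => h.2, fun h => ⟨h ▸ hx, h⟩⟩
  have hratio : P1 / P2 = (∏ e ∈ E.filter (fun e => e.1 = s), f e) /
      (∏ e ∈ E.filter (fun e => e.2 = s), f e) := by
    rw [hP1split, hP2split,
      ← Finset.prod_erase_mul S _ hsS, ← Finset.prod_erase_mul S _ hsS]
    have hcancel : ∏ x ∈ S.erase s, ∏ e ∈ E.filter (fun e => e.1 = x), f e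
        = ∏ x ∈ S.erase s, ∏ e ∈ E.filter (fun e => e.2 = x), f e := by
      apply Finset.prod_congr rfl
      intro x hx
      have hxs : x ≠ s := (Finset.mem_erase.mp hx).1
      have hxt : x ≠ t := fun h => htS (h ▸ (Finset.mem_erase.mp hx).2)
      exact (hcons x hxs hxt).symm
    rw [hcancel]
    have hne : ∏ x ∈ S.erase s, ∏ e ∈ E.filter (fun e => e.2 = x), f e ≠ 0 := by
      apply Finset.prod_ne_zero_iff.mpr
      intro x hx
      apply Finset.prod_ne_zero_iff.mpr
      intro e he
      exact ne_of_gt (hfpos e (Finset.mem_filter.mp he).1)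
    rw [mul_div_mul_left _ _ hne]
  -- Step 2: split P1, P2 into internal + crossing
  have hsplit1 : P1 = (∏ e ∈ E.filter (fun e => e.1 ∈ S ∧ e.2 ∈ S), f e) *
      (∏ e ∈ E.filter (fun e => e.1 ∈ S ∧ e.2 ∉ S), f e) := by
    rw [hP1, ← Finset.prod_filter_mul_prod_filter_not (E.filter (fun e => e.1 ∈ S))
      (fun e => e.2 ∈ S), Finset.filter_filter, Finset.filter_filter]
  have hsplit2 : P2 = (∏ e ∈ E.filter (fun e => e.1 ∈ S ∧ e.2 ∈ S), f e) *
      (∏ e ∈ E.filter (fun e => e.2 ∈ S ∧ e.1 ∉ S), f e) := by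
    rw [hP2, ← Finset.prod_filter_mul_prod_filter_not (E.filter (fun e => e.2 ∈ S))
      (fun e => e.1 ∈ S), Finset.filter_filter, Finset.filter_filter]
    congr 1
    · apply Finset.prod_congr _ (fun _ _ => rfl)
      apply Finset.filter_congr; intro e he; simp [and_comm]
  -- Step 3: backward crossing = image of forward under swap
  have hback : (∏ e ∈ E.filter (fun e => e.2 ∈ S ∧ e.1 ∉ S), f e)
      = ∏ e ∈ E.filter (fun e => e.1 ∈ S ∧ e.2 ∉ S), f (e.2, e.1) := by
    apply Finset.prod_nbij' (fun e => (e.2, e.1)) (fun e => (e.2, e.1))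
    · intro e he
      obtain ⟨heE, h2, h1⟩ := Finset.mem_filter.mp he
      exact Finset.mem_filter.mpr ⟨hsymm e.1 e.2 heE, h2, h1⟩
    · intro e he
      obtain ⟨heE, h1, h2⟩ := Finset.mem_filter.mp he
      exact Finset.mem_filter.mpr ⟨hsymm e.1 e.2 heE, h1, h2⟩
    · intro e _; rfl
    · intro e _; rfl
    · intro e _; rfl
  -- Step 4: value = product of ratios over cut
  set C := E.filter (fun e => e.1 ∈ S ∧ e.2 ∉ S) with hC
  have hCpos : ∀ e ∈ C, 0 < f e ∧ 0 < f (e.2, e.1) := by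
    intro e he
    have heE := (Finset.mem_filter.mp he).1
    exact ⟨hfpos e heE, hfpos (e.2, e.1) (hsymm e.1 e.2 heE)⟩
  have hPint_ne : (∏ e ∈ E.filter (fun e => e.1 ∈ S ∧ e.2 ∈ S), f e) ≠ 0 := by
    apply Finset.prod_ne_zero_iff.mpr
    intro e he
    exact ne_of_gt (hfpos e (Finset.mem_filter.mp he).1)
  have hfwd_ne : (∏ e ∈ C, f e) ≠ 0 :=
    Finset.prod_ne_zero_iff.mpr (fun e he => ne_of_gt (hCpos e he).1)
  have hbwd_ne : (∏ e ∈ C, f (e.2, e.1)) ≠ 0 :=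
    Finset.prod_ne_zero_iff.mpr (fun e he => ne_of_gt (hCpos e he).2)
  have hvalC : (∏ e ∈ C, f e / f (e.2, e.1)) = (QMC E d s t : ℝ) := by
    rw [Finset.prod_div_distrib]
    rw [← hval, ← hratio, hsplit1, hsplit2, hback]
    field_simp
  -- Step 5: each ratio ≤ d e, positive, product equals product of d over C
  have hdC : (∏ e ∈ C, (d e : ℝ)) = (QMC E d s t : ℝ) := by
    rw [← hmin]; push_cast [hC]; rfl
  have heqprod : (∏ e ∈ C, f e / f (e.2, e.1)) = ∏ e ∈ C, (d e : ℝ) := by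
    rw [hvalC, hdC]
  have hrle : ∀ e ∈ C, f e / f (e.2, e.1) ≤ (d e : ℝ) := by
    intro e he
    have heE := (Finset.mem_filter.mp he).1
    have hrevE := hsymm e.1 e.2 heE
    obtain ⟨hpos1, hpos2⟩ := hCpos e he
    rcases hdir e heE with h1 | h2
    · -- f e = 1, ratio = 1 / f(e.2,e.1) ≤ d (e.2,e.1) = d e
      rw [h1]
      have hcap2 := (hcap (e.2, e.1) hrevE).1
      have hd : d (e.2, e.1) = d e := by
        have := hdsymm e.2 e.1; rw [this]
      rw [← hd]
      rw [div_le_iff₀ hpos2]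
      have hdpos : (0:ℝ) < (d (e.2, e.1) : ℝ) := by
        exact_mod_cast lt_of_lt_of_le (by norm_num) (hd2 _ hrevE)
      calc (1:ℝ) = (d (e.2,e.1) : ℝ) * (1 / (d (e.2,e.1):ℝ)) := by field_simp
        _ ≤ (d (e.2,e.1) : ℝ) * f (e.2,e.1) := by
            apply mul_le_mul_of_nonneg_left hcap2 (le_of_lt hdpos)
    · -- f (e.2,e.1) = 1, ratio = f e ≤ d e
      rw [h2, div_one]
      exact (hcap e heE).2
  have hrpos : ∀ e ∈ C, 0 < f e / f (e.2, e.1) := by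
    intro e he
    obtain ⟨hpos1, hpos2⟩ := hCpos e he
    positivity
  have huvC : (u, v) ∈ C := Finset.mem_filter.mpr ⟨huvE, huS, hvS⟩
  exact prod_eq_forall_eq C _ _ hrpos hrle heqprod (u, v) huvC
end

section
/- For any quantum tensor network N = (G, d, s, t), the supremum over multiplicative flows over ℝ of the flow value equals the quantum min-cut: QMF_ℝ(N) = QMC(N). In particular, there exists a real-valued multiplicative flow achieving value exactly QMC(N). -/
open Finset

/-- A multiplicative flow over ℝ on a quantum tensor network: positive values,
single-direction condition, capacity constraint, multiplicative conservation. -/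
def IsRealQFlow {V : Type*} [DecidableEq V] (E : Finset (V × V)) (d : V × V → ℕ)
    (s t : V) (f : V × V → ℝ) : Prop :=
  (∀ e ∈ E, 0 < f e) ∧
  (∀ e ∈ E, f e = 1 ∨ f (e.2, e.1) = 1) ∧
  (∀ e ∈ E, 1 / (d e : ℝ) ≤ f e ∧ f e ≤ (d e : ℝ)) ∧
  (∀ v : V, v ≠ s → v ≠ t →
    ∏ e ∈ E.filter (fun e => e.2 = v), f e = ∏ e ∈ E.filter (fun e => e.1 = v), f e)

/-- The value of a flow: ratio of products at the source. -/
noncomputable def flowValue {V : Type*} [DecidableEq V] (E : Finset (V × V)) (s : V)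
    (f : V × V → ℝ) : ℝ :=
  (∏ e ∈ E.filter (fun e => e.1 = s), f e) / (∏ e ∈ E.filter (fun e => e.2 = s), f e)

/-!
Writing `g e = log (f e) - log (f e.swap)`, a multiplicative flow becomes a skew-symmetric
additive flow with capacities `log (d e)`; conversely `f e = exp (g e)⁺` turns such a flow back
into a multiplicative one (the single-direction condition holds because one of `g e`, `g e.swap`
is `≤ 0`), and flow values correspond under `exp`. So the theorem is the real max-flow min-cut
theorem for the capacities `log d`.

By conservation and skew-symmetry, the value of an additive flow is its net flow across any
`s`-`t` cut, which gives weak duality. A maximal flow exists by compactness. For a maximal flow,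
`t` is not reachable from `s` along edges with slack, since pushing a small amount along such a
walk would increase the value; the vertices reachable from `s` then form a cut whose edges are
all saturated, so its capacity is the value of the flow.
-/

open Real Filter Topology

section SkewFlow

variable {V : Type*} {E : Finset (V × V)} {c g : V × V → ℝ} {s t : V}

theorem sum_eq_zero_of_swap_mem {F : Finset (V × V)} (hF : ∀ e ∈ F, e.swap ∈ F)
    (hg : ∀ e, g e.swap = -g e) : ∑ e ∈ F, g e = 0 := by
  have h : ∑ e ∈ F, g e.swap = ∑ e ∈ F, g e :=
    sum_nbij' Prod.swap Prod.swap hF hF (fun _ _ => rfl) (fun _ _ => rfl) (fun _ _ => rfl)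
  simp only [hg, sum_neg_distrib] at h
  linarith

variable [DecidableEq V]

def inflow (E : Finset (V × V)) (g : V × V → ℝ) (v : V) : ℝ :=
  ∑ e ∈ E with e.2 = v, g e

def outflow (E : Finset (V × V)) (g : V × V → ℝ) (v : V) : ℝ :=
  ∑ e ∈ E with e.1 = v, g e

def cutEdges (E : Finset (V × V)) (S : Finset V) : Finset (V × V) :=
  E.filter fun e => e.1 ∈ S ∧ e.2 ∉ S

structure IsSkewFlow (E : Finset (V × V)) (c : V × V → ℝ) (s t : V) (g : V × V → ℝ) :
    Prop where
  /-- This normalisation makes the set of flows compact. -/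
  eq_zero_of_notMem : ∀ e ∉ E, g e = 0
  swap_eq_neg : ∀ e, g e.swap = -g e
  le_cap : ∀ e ∈ E, g e ≤ c e
  inflow_eq_zero : ∀ v, v ≠ s → v ≠ t → inflow E g v = 0

theorem sum_filter_fst_swap {M : Type*} [AddCommMonoid M]
    (hE : ∀ u v, (u, v) ∈ E → (v, u) ∈ E) (h : V × V → M) (v : V) :
    ∑ e ∈ E with e.1 = v, h e.swap = ∑ e ∈ E with e.2 = v, h e :=
  sum_nbij' Prod.swap Prod.swap
    (fun e he => by simp only [mem_filter] at he ⊢; exact ⟨hE _ _ he.1, he.2⟩)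
    (fun e he => by simp only [mem_filter] at he ⊢; exact ⟨hE _ _ he.1, he.2⟩)
    (fun _ _ => rfl) (fun _ _ => rfl) (fun _ _ => rfl)

theorem outflow_eq_neg_inflow (hE : ∀ u v, (u, v) ∈ E → (v, u) ∈ E)
    (hg : ∀ e, g e.swap = -g e) (v : V) : outflow E g v = -inflow E g v := by
  rw [inflow, ← sum_filter_fst_swap hE, outflow, ← sum_neg_distrib]
  exact sum_congr rfl fun e _ => by rw [hg, neg_neg]

theorem inflow_add (g h : V × V → ℝ) : inflow E (g + h) = inflow E g + inflow E h := by
  ext v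
  simp [inflow, sum_add_distrib]

theorem inflow_smul (δ : ℝ) (g : V × V → ℝ) : inflow E (δ • g) = δ • inflow E g := by
  ext v
  simp [inflow, mul_sum]

namespace IsSkewFlow

theorem outflow_eq_sum_cutEdges (hE : ∀ u v, (u, v) ∈ E → (v, u) ∈ E)
    (hg : IsSkewFlow E c s t g) {S : Finset V} (hs : s ∈ S) (ht : t ∉ S) :
    outflow E g s = ∑ e ∈ cutEdges E S, g e := by
  have h_inside : ∑ e ∈ E with e.1 ∈ S ∧ e.2 ∈ S, g e = 0 :=
    sum_eq_zero_of_swap_mem (fun e he => by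
      simp only [mem_filter] at he ⊢; exact ⟨hE _ _ he.1, he.2.2, he.2.1⟩) hg.swap_eq_neg
  calc outflow E g s = ∑ v ∈ S, outflow E g v := by
        refine (sum_eq_single_of_mem s hs fun v hv hvs => ?_).symm
        rw [outflow_eq_neg_inflow hE hg.swap_eq_neg,
          hg.inflow_eq_zero v hvs (ne_of_mem_of_not_mem hv ht), neg_zero]
    _ = ∑ e ∈ E with e.1 ∈ S, g e := sum_fiberwise_eq_sum_filter E S Prod.fst g
    _ = ∑ e ∈ cutEdges E S, g e := by
        rw [← sum_filter_add_sum_filter_not _ (fun e => e.2 ∈ S), filter_filter, filter_filter,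
          h_inside, zero_add]
        rfl

theorem outflow_le_sum_cutEdges (hE : ∀ u v, (u, v) ∈ E → (v, u) ∈ E)
    (hg : IsSkewFlow E c s t g) {S : Finset V} (hs : s ∈ S) (ht : t ∉ S) :
    outflow E g s ≤ ∑ e ∈ cutEdges E S, c e := by
  rw [hg.outflow_eq_sum_cutEdges hE hs ht]
  exact sum_le_sum fun e he => hg.le_cap e (mem_filter.1 he).1

theorem le_abs_cap (hg : IsSkewFlow E c s t g) (e : V × V) : g e ≤ |c e| := by
  by_cases he : e ∈ E
  · exact (hg.le_cap e he).trans (le_abs_self _)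
  · exact (hg.eq_zero_of_notMem e he).trans_le (abs_nonneg _)

theorem mem_Icc (hg : IsSkewFlow E c s t g) (e : V × V) : g e ∈ Set.Icc (-|c e.swap|) |c e| :=
  ⟨by simpa [hg.swap_eq_neg] using neg_le_neg (hg.le_abs_cap e.swap), hg.le_abs_cap e⟩

end IsSkewFlow

theorem isSkewFlow_zero (hc : ∀ e ∈ E, 0 ≤ c e) : IsSkewFlow E c s t 0 :=
  ⟨fun _ _ => rfl, fun _ => neg_zero.symm, hc, fun _ _ _ => by simp [inflow]⟩

theorem isClosed_setOf_isSkewFlow : IsClosed {g : V × V → ℝ | IsSkewFlow E c s t g} := by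
  have h : {g : V × V → ℝ | IsSkewFlow E c s t g} =
      {g | ∀ e ∉ E, g e = 0} ∩ {g | ∀ e, g e.swap = -g e} ∩ {g | ∀ e ∈ E, g e ≤ c e} ∩
        {g | ∀ v, v ≠ s → v ≠ t → inflow E g v = 0} := by
    ext g
    exact ⟨fun ⟨h₁, h₂, h₃, h₄⟩ => ⟨⟨⟨h₁, h₂⟩, h₃⟩, h₄⟩,
      fun ⟨⟨⟨h₁, h₂⟩, h₃⟩, h₄⟩ => ⟨h₁, h₂, h₃, h₄⟩⟩
  have hinflow (v : V) : Continuous fun g : V × V → ℝ => inflow E g v :=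
    continuous_finsetSum _ fun e _ => continuous_apply e
  rw [h]
  simp only [Set.ofPred_forall]
  refine (((isClosed_iInter fun e => isClosed_iInter fun _ => ?_).inter
    (isClosed_iInter fun e => ?_)).inter
    (isClosed_iInter fun e => isClosed_iInter fun _ => ?_)).inter
    (isClosed_iInter fun v => isClosed_iInter fun _ => isClosed_iInter fun _ => ?_)
  · exact isClosed_eq (continuous_apply e) continuous_const
  · exact isClosed_eq (continuous_apply _) (continuous_apply e).neg
  · exact isClosed_le (continuous_apply e) continuous_const
  · exact isClosed_eq (hinflow v) continuous_const

theorem isCompact_setOf_isSkewFlow : IsCompact {g : V × V → ℝ | IsSkewFlow E c s t g} :=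
  (isCompact_univ_pi fun _ => isCompact_Icc).of_isClosed_subset isClosed_setOf_isSkewFlow
    fun _ hg => Set.mem_univ_pi.2 hg.mem_Icc

theorem exists_isSkewFlow_forall_outflow_le (hc : ∀ e ∈ E, 0 ≤ c e) :
    ∃ g, IsSkewFlow E c s t g ∧ ∀ g', IsSkewFlow E c s t g' → outflow E g' s ≤ outflow E g s := by
  obtain ⟨g, hg, hmax⟩ := isCompact_setOf_isSkewFlow.exists_isMaxOn ⟨0, isSkewFlow_zero hc⟩
    (continuous_finsetSum _ fun e _ => continuous_apply e).continuousOn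
  exact ⟨g, hg, fun _ hg' => hmax hg'⟩

def edgeFlow (a b : V) : V × V → ℝ :=
  Pi.single (a, b) 1 - Pi.single (b, a) 1

theorem edgeFlow_swap (a b : V) (e : V × V) : edgeFlow a b e.swap = -edgeFlow a b e := by
  simp only [edgeFlow, Pi.sub_apply, Pi.single_apply, Prod.swap_eq_iff_eq_swap, Prod.swap_prod_mk]
  ring

theorem eq_of_edgeFlow_pos {a b : V} {e : V × V} (h : 0 < edgeFlow a b e) : e = (a, b) := by
  by_contra hne
  simp only [edgeFlow, Pi.sub_apply, Pi.single_apply, if_neg hne] at h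
  split_ifs at h <;> norm_num at h

theorem edgeFlow_eq_zero_of_notMem (hE : ∀ u v, (u, v) ∈ E → (v, u) ∈ E) {a b : V}
    (hab : (a, b) ∈ E) {e : V × V} (he : e ∉ E) : edgeFlow a b e = 0 := by
  have h₁ : e ≠ (a, b) := fun h => he (h ▸ hab)
  have h₂ : e ≠ (b, a) := fun h => he (h ▸ hE a b hab)
  simp [edgeFlow, h₁, h₂]

theorem inflow_edgeFlow (hE : ∀ u v, (u, v) ∈ E → (v, u) ∈ E) {a b : V} (hab : (a, b) ∈ E) :
    inflow E (edgeFlow a b) = Pi.single b 1 - Pi.single a 1 := by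
  ext v
  simp [inflow, edgeFlow, sum_sub_distrib, Pi.single_apply, hab, hE a b hab, eq_comm]

/-- Walks need not be simple here: the sum of the edge flows along a walk is positive only on
edges of the walk. -/
theorem exists_unitFlow_of_reflTransGen (hE : ∀ u v, (u, v) ∈ E → (v, u) ∈ E)
    {R : V → V → Prop} (hR : ∀ a b, R a b → (a, b) ∈ E) {a b : V}
    (h : Relation.ReflTransGen R a b) :
    ∃ φ : V × V → ℝ, (∀ e ∉ E, φ e = 0) ∧ (∀ e, φ e.swap = -φ e) ∧
      (∀ e, 0 < φ e → R e.1 e.2) ∧ inflow E φ = Pi.single b 1 - Pi.single a 1 := by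
  induction h with
  | refl => exact ⟨0, fun _ _ => rfl, fun _ => neg_zero.symm, fun _ h => (lt_irrefl _ h).elim,
      by ext; simp [inflow]⟩
  | @tail b c _ hbc ih =>
    obtain ⟨φ, hφ₀, hφswap, hφpos, hφin⟩ := ih
    refine ⟨φ + edgeFlow b c, fun e he => ?_, fun e => ?_, fun e he => ?_, ?_⟩
    · simp [hφ₀ e he, edgeFlow_eq_zero_of_notMem hE (hR b c hbc) he]
    · simp only [Pi.add_apply, hφswap, edgeFlow_swap]
      ring
    · rcases lt_or_ge 0 (φ e) with h | h
      · exact hφpos e h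
      · rw [eq_of_edgeFlow_pos (show 0 < edgeFlow b c e by rw [Pi.add_apply] at he; linarith)]
        exact hbc
    · rw [inflow_add, hφin, inflow_edgeFlow hE (hR b c hbc)]
      abel

def ResidualAdj (E : Finset (V × V)) (c g : V × V → ℝ) (a b : V) : Prop :=
  (a, b) ∈ E ∧ g (a, b) < c (a, b)

namespace IsSkewFlow

theorem exists_outflow_lt (hE : ∀ u v, (u, v) ∈ E → (v, u) ∈ E) (hg : IsSkewFlow E c s t g)
    (hst : s ≠ t) (hpath : Relation.ReflTransGen (ResidualAdj E c g) s t) :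
    ∃ g', IsSkewFlow E c s t g' ∧ outflow E g s < outflow E g' s := by
  obtain ⟨φ, hφ₀, hφswap, hφpos, hφin⟩ :=
    exists_unitFlow_of_reflTransGen hE (fun _ _ h => h.1) hpath
  have hsmall : ∀ᶠ δ in 𝓝[>] (0 : ℝ), ∀ e ∈ E, 0 < φ e → g e + δ * φ e ≤ c e := by
    refine (eventually_all_finset E).2 fun e _ => nhdsWithin_le_nhds ?_
    by_cases he : 0 < φ e
    · have hlt : g e + 0 * φ e < c e := by simpa using (hφpos e he).2
      filter_upwards [(by fun_prop : Continuous fun δ : ℝ => g e + δ * φ e).continuousAt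
        |>.eventually_lt continuousAt_const hlt] with δ hδ _ using hδ.le
    · exact Eventually.of_forall fun _ h => absurd h he
  obtain ⟨δ, hδ, hδpos⟩ := (hsmall.and self_mem_nhdsWithin).exists
  have hin : inflow E (g + δ • φ) = inflow E g + δ • (Pi.single t 1 - Pi.single s 1) := by
    rw [inflow_add, inflow_smul, hφin]
  have hg' : IsSkewFlow E c s t (g + δ • φ) := by
    refine ⟨fun e he => ?_, fun e => ?_, fun e he => ?_, fun v hvs hvt => ?_⟩
    · simp [hg.eq_zero_of_notMem e he, hφ₀ e he]
    · simp only [Pi.add_apply, Pi.smul_apply, smul_eq_mul, hg.swap_eq_neg, hφswap]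
      ring
    · rcases lt_or_ge 0 (φ e) with h | h
      · exact hδ e he h
      · have := mul_nonpos_of_nonneg_of_nonpos hδpos.le h
        simp only [Pi.add_apply, Pi.smul_apply, smul_eq_mul]
        linarith [hg.le_cap e he]
    · simp [hin, hg.inflow_eq_zero v hvs hvt, hvs, hvt]
  refine ⟨g + δ • φ, hg', ?_⟩
  rw [outflow_eq_neg_inflow hE hg.swap_eq_neg, outflow_eq_neg_inflow hE hg'.swap_eq_neg, hin]
  simpa [hst] using hδpos

end IsSkewFlow

theorem finite_setOf_reflTransGen {R : V → V → Prop} (hR : ∀ a b, R a b → (a, b) ∈ E) (a : V) :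
    {b | Relation.ReflTransGen R a b}.Finite :=
  ((E.image Prod.snd).finite_toSet.insert a).subset fun b hb => by
    rcases Relation.ReflTransGen.cases_tail hb with rfl | ⟨c, -, hcb⟩
    · exact Set.mem_insert _ _
    · exact Set.mem_insert_of_mem _ (by simpa using ⟨c, hR c b hcb⟩)

theorem exists_isSkewFlow_outflow_eq_sum_cutEdges (hE : ∀ u v, (u, v) ∈ E → (v, u) ∈ E)
    (hc : ∀ e ∈ E, 0 ≤ c e) (hst : s ≠ t) :
    ∃ g S, IsSkewFlow E c s t g ∧ s ∈ S ∧ t ∉ S ∧ outflow E g s = ∑ e ∈ cutEdges E S, c e := by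
  obtain ⟨g, hg, hmax⟩ := exists_isSkewFlow_forall_outflow_le (s := s) (t := t) hc
  have hno_path : ¬ Relation.ReflTransGen (ResidualAdj E c g) s t := fun hpath =>
    let ⟨g', hg', hlt⟩ := hg.exists_outflow_lt hE hst hpath
    (hlt.trans_le (hmax g' hg')).false
  set S := (finite_setOf_reflTransGen (R := ResidualAdj E c g) (fun _ _ h => h.1) s).toFinset
  have hmem (v : V) : v ∈ S ↔ Relation.ReflTransGen (ResidualAdj E c g) s v :=
    Set.Finite.mem_toFinset _
  have hs : s ∈ S := (hmem s).2 .refl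
  have ht : t ∉ S := fun ht => hno_path ((hmem t).1 ht)
  refine ⟨g, S, hg, hs, ht, ?_⟩
  rw [hg.outflow_eq_sum_cutEdges hE hs ht]
  refine sum_congr rfl fun e he => ?_
  obtain ⟨heE, h₁, h₂⟩ : e ∈ E ∧ e.1 ∈ S ∧ e.2 ∉ S := by
    simpa only [cutEdges, mem_filter, and_assoc] using he
  exact (hg.le_cap e heE).antisymm
    (not_lt.1 fun hlt => h₂ ((hmem _).2 (((hmem _).1 h₁).tail ⟨heE, hlt⟩)))

end SkewFlow

section QuantumNetwork

variable {V : Type*} [DecidableEq V] {E : Finset (V × V)} {d : V × V → ℕ} {s t : V}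

noncomputable def logRatio (E : Finset (V × V)) (f : V × V → ℝ) (e : V × V) : ℝ :=
  if e ∈ E then log (f e) - log (f e.swap) else 0

theorem logRatio_swap (hE : ∀ u v, (u, v) ∈ E → (v, u) ∈ E) (f : V × V → ℝ) (e : V × V) :
    logRatio E f e.swap = -logRatio E f e := by
  have hswap : e.swap ∈ E ↔ e ∈ E := ⟨hE _ _, hE _ _⟩
  by_cases he : e ∈ E <;> simp [logRatio, he, hswap]

theorem exp_outflow_logRatio (hE : ∀ u v, (u, v) ∈ E → (v, u) ∈ E) {f : V × V → ℝ}
    (hf : ∀ e ∈ E, 0 < f e) (v : V) :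
    exp (outflow E (logRatio E f) v) = flowValue E v f := by
  have hprod (p : V × V → Prop) [DecidablePred p] : 0 < ∏ e ∈ E with p e, f e :=
    prod_pos fun e he => hf e (mem_filter.1 he).1
  have hlog (p : V × V → Prop) [DecidablePred p] :
      log (∏ e ∈ E with p e, f e) = ∑ e ∈ E with p e, log (f e) :=
    log_prod fun e he => (hf e (mem_filter.1 he).1).ne'
  have houtflow : outflow E (logRatio E f) v =
      ∑ e ∈ E with e.1 = v, log (f e) - ∑ e ∈ E with e.2 = v, log (f e) := by
    rw [← sum_filter_fst_swap hE (fun e => log (f e)), ← sum_sub_distrib]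
    exact sum_congr rfl fun e he => if_pos (mem_filter.1 he).1
  rw [houtflow, ← hlog, ← hlog, ← log_div (hprod _).ne' (hprod _).ne',
    exp_log (div_pos (hprod _) (hprod _))]
  rfl

theorem flowValue_exp_posPart (hE : ∀ u v, (u, v) ∈ E → (v, u) ∈ E) {g : V × V → ℝ}
    (hg : ∀ e, g e.swap = -g e) (v : V) :
    flowValue E v (fun e => exp (g e)⁺) = exp (outflow E g v) := by
  rw [flowValue, ← exp_sum, ← exp_sum, ← exp_sub, ← sum_filter_fst_swap hE (fun e => (g e)⁺),
    ← sum_sub_distrib, outflow]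
  congr 1
  refine sum_congr rfl fun e _ => ?_
  rw [hg, posPart_neg, posPart_sub_negPart]

theorem IsRealQFlow.isSkewFlow_logRatio (hE : ∀ u v, (u, v) ∈ E → (v, u) ∈ E)
    (hd : ∀ u v, d (u, v) = d (v, u)) (hd₀ : ∀ e ∈ E, 0 < d e) {f : V × V → ℝ}
    (hf : IsRealQFlow E d s t f) : IsSkewFlow E (fun e => log (d e)) s t (logRatio E f) := by
  obtain ⟨hpos, hone, hcap, hcons⟩ := hf
  refine ⟨fun e he => if_neg he, logRatio_swap hE f, fun e he => ?_, fun v hvs hvt => ?_⟩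
  · obtain ⟨a, b⟩ := e
    rw [logRatio, if_pos he, Prod.swap_prod_mk]
    rcases hone _ he with h | h
    · have hlow : 1 / (d (a, b) : ℝ) ≤ f (b, a) := hd a b ▸ (hcap _ (hE _ _ he)).1
      have hlog := log_le_log (one_div_pos.2 (Nat.cast_pos.2 (hd₀ _ he))) hlow
      rw [one_div, log_inv] at hlog
      rw [h, log_one]
      linarith
    · rw [show f (b, a) = 1 from h, log_one, sub_zero]
      exact log_le_log (hpos _ he) (hcap _ he).2
  · have hval := exp_outflow_logRatio hE hpos v
    rw [flowValue, hcons v hvs hvt, div_self (prod_pos fun e he => hpos e (mem_filter.1 he).1).ne',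
      exp_eq_one_iff, outflow_eq_neg_inflow hE (logRatio_swap hE f), neg_eq_zero] at hval
    exact hval

theorem IsSkewFlow.isRealQFlow_exp_posPart (hE : ∀ u v, (u, v) ∈ E → (v, u) ∈ E)
    (hd₀ : ∀ e ∈ E, 0 < d e) {g : V × V → ℝ} (hg : IsSkewFlow E (fun e => log (d e)) s t g) :
    IsRealQFlow E d s t (fun e => exp (g e)⁺) := by
  refine ⟨fun e _ => exp_pos _, fun e _ => ?_, fun e he => ⟨?_, ?_⟩, fun v hvs hvt => ?_⟩
  · rcases le_total (g e) 0 with h | h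
    · exact Or.inl (by simp [posPart_eq_zero.2 h])
    · exact Or.inr (by simp [show g (e.2, e.1) = -g e from hg.swap_eq_neg e, h])
  · calc 1 / (d e : ℝ) ≤ 1 := div_le_one_of_le₀ (Nat.one_le_cast.2 (hd₀ e he)) (by positivity)
      _ ≤ exp (g e)⁺ := one_le_exp (posPart_nonneg _)
  · calc exp (g e)⁺ ≤ exp (log (d e)) :=
          exp_le_exp.2 (sup_le (hg.le_cap e he) (log_natCast_nonneg _))
      _ = d e := exp_log (Nat.cast_pos.2 (hd₀ e he))
  · have hval := flowValue_exp_posPart hE hg.swap_eq_neg v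
    rw [outflow_eq_neg_inflow hE hg.swap_eq_neg, hg.inflow_eq_zero v hvs hvt, neg_zero, exp_zero,
      flowValue, div_eq_one_iff_eq (prod_pos fun e _ => exp_pos _).ne'] at hval
    exact hval.symm

theorem exists_cut_eq_QMC (E : Finset (V × V)) (d : V × V → ℕ) (hst : s ≠ t) :
    ∃ S : Finset V, s ∈ S ∧ t ∉ S ∧ QMC E d s t = ∏ e ∈ cutEdges E S, d e :=
  Nat.sInf_mem (s := {m | ∃ S : Finset V, s ∈ S ∧ t ∉ S ∧ m = ∏ e ∈ cutEdges E S, d e})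
    ⟨_, {s}, mem_singleton_self s, by simpa using hst.symm, rfl⟩

theorem QMC_le_prod_cutEdges (E : Finset (V × V)) (d : V × V → ℕ) {S : Finset V} (hs : s ∈ S)
    (ht : t ∉ S) : QMC E d s t ≤ ∏ e ∈ cutEdges E S, d e := by
  unfold QMC
  exact Nat.sInf_le ⟨S, hs, ht, rfl⟩

end QuantumNetwork

/-- The maximum flow over ℝ of a quantum tensor network equals the
quantum min-cut: every real multiplicative flow has value at most `QMC`, and there is
a real multiplicative flow achieving value exactly `QMC`. -/
theorem QMF_real_eq_QMC {V : Type*} [DecidableEq V]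
    (E : Finset (V × V)) (hsymm : ∀ u v : V, (u, v) ∈ E → (v, u) ∈ E)
    (d : V × V → ℕ) (hdsymm : ∀ u v : V, d (u, v) = d (v, u))
    (hd2 : ∀ e ∈ E, 2 ≤ d e)
    (s t : V) (hst : s ≠ t) :
    (∀ f : V × V → ℝ, IsRealQFlow E d s t f → flowValue E s f ≤ (QMC E d s t : ℝ)) ∧
    (∃ f : V × V → ℝ, IsRealQFlow E d s t f ∧ flowValue E s f = (QMC E d s t : ℝ)) := by
  have hd₀ : ∀ e ∈ E, 0 < d e := fun e he => two_pos.trans_le (hd2 e he)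
  have hexp_cut (S : Finset V) :
      exp (∑ e ∈ cutEdges E S, log (d e : ℝ)) = ((∏ e ∈ cutEdges E S, d e : ℕ) : ℝ) := by
    rw [exp_sum, Nat.cast_prod]
    exact prod_congr rfl fun e he => exp_log (Nat.cast_pos.2 (hd₀ e (mem_filter.1 he).1))
  obtain ⟨S₀, hs₀, ht₀, hQMC⟩ := exists_cut_eq_QMC E d hst
  have hweak (f : V × V → ℝ) (hf : IsRealQFlow E d s t f) : flowValue E s f ≤ QMC E d s t := by
    rw [← exp_outflow_logRatio hsymm hf.1, hQMC, ← hexp_cut]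
    exact exp_le_exp.2 <|
      (hf.isSkewFlow_logRatio hsymm hdsymm hd₀).outflow_le_sum_cutEdges hsymm hs₀ ht₀
  obtain ⟨g, S, hg, hs, ht, hgS⟩ :=
    exists_isSkewFlow_outflow_eq_sum_cutEdges hsymm (fun e _ => log_natCast_nonneg (d e)) hst
  have hf := hg.isRealQFlow_exp_posPart hsymm hd₀
  refine ⟨hweak, _, hf, (hweak _ hf).antisymm ?_⟩
  rw [flowValue_exp_posPart hsymm hg.swap_eq_neg, hgS, hexp_cut]
  exact_mod_cast QMC_le_prod_cutEdges E d hs ht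
end

section
/- Given a multiplicative flow f : E → ℝ_{>0} on a directed graph with value |f| = QMC(N), and a cycle u_0, ..., u_m of edges none of which lies in any minimum cut (so the flow values on these edges are strictly between 1/d and d), multiplying the flows on all cycle edges by a common factor 1+ε with ε sufficiently small preserves the conservation law, the capacity constraints, and the flow value. -/
/-!
A cycle through distinct vertices enters each vertex exactly as often as it leaves it, so
scaling every cycle edge by `1 + ε` multiplies the in- and out-products at every vertex by the
same power of `1 + ε`. This keeps conservation and the value ratio at `s`. The lower capacity
bounds only improve, and the upper ones survive for small `ε` because each cycle edge is
strictly below capacity.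
-/

open Finset

open Filter Topology

theorem card_filter_add_right {G : Type*} [AddGroup G] [Fintype G] (p : G → Prop)
    [DecidablePred p] (a : G) : #{i | p (i + a)} = #{i | p i} := by
  simp only [card_filter]
  exact Equiv.sum_comp (Equiv.addRight a) fun i => if p i then 1 else 0

theorem prod_filter_ite_mem_mul {α M : Type*} [DecidableEq α] [CommMonoid M]
    {C E : Finset α} (hCE : C ⊆ E) (p : α → Prop) [DecidablePred p] (c : M) (f : α → M) :
    ∏ e ∈ E.filter p, (if e ∈ C then c * f e else f e)
      = c ^ #(C.filter p) * ∏ e ∈ E.filter p, f e := by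
  have hinter : E.filter p ∩ C = C.filter p := by
    ext e
    simp only [mem_inter, mem_filter]
    exact ⟨fun ⟨⟨_, hp⟩, hC⟩ => ⟨hC, hp⟩, fun ⟨hC, hp⟩ => ⟨⟨hCE hC, hp⟩, hC⟩⟩
  calc ∏ e ∈ E.filter p, (if e ∈ C then c * f e else f e)
      = ∏ e ∈ E.filter p, (if e ∈ C then c else 1) * f e :=
        prod_congr rfl fun e _ => by split_ifs <;> simp
    _ = c ^ #(C.filter p) * ∏ e ∈ E.filter p, f e := by
        rw [prod_mul_distrib, prod_ite_mem, hinter, prod_const]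

theorem eventually_forall_one_add_mul_lt {ι : Type*} [Finite ι] {f d : ι → ℝ}
    (h : ∀ i, f i < d i) : ∀ᶠ ε in 𝓝 (0 : ℝ), ∀ i, (1 + ε) * f i < d i :=
  eventually_all.2 fun i => Tendsto.eventually_lt_const (by simpa using h i)
    ((continuous_const.add continuous_id).mul continuous_const).continuousAt.tendsto

section Cycle

variable {V : Type*} [DecidableEq V] {m : ℕ}

def cycleEdges (u : Fin (m + 1) → V) : Finset (V × V) :=
  univ.image fun i => (u i, u (i + 1))

theorem card_cycleEdges_filter_snd_eq_fst {u : Fin (m + 1) → V} (hu : Function.Injective u)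
    (v : V) : #((cycleEdges u).filter (·.2 = v)) = #((cycleEdges u).filter (·.1 = v)) := by
  have hedge : Function.Injective fun i => (u i, u (i + 1)) :=
    fun i j hij => hu (congrArg Prod.fst hij)
  rw [cycleEdges, filter_image, filter_image, card_image_of_injective _ hedge,
    card_image_of_injective _ hedge]
  exact card_filter_add_right (fun i => u i = v) 1

end Cycle

theorem cycle_perturbation_preserves_flow_general {V : Type*} [DecidableEq V]
    (E : Finset (V × V))
    (d : V × V → ℕ)
    (s t : V)
    (f : V × V → ℝ)
    (hcap : ∀ e ∈ E, 1 / (d e : ℝ) ≤ f e ∧ f e ≤ (d e : ℝ))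
    (hcons : ∀ v : V, v ≠ s → v ≠ t →
      ∏ e ∈ E.filter (fun e => e.2 = v), f e = ∏ e ∈ E.filter (fun e => e.1 = v), f e)
    (m : ℕ) (u : Fin (m + 1) → V) (hu : Function.Injective u)
    (hcycE : ∀ i : Fin (m + 1), (u i, u (i + 1)) ∈ E)
    (hstrict : ∀ i : Fin (m + 1),
      1 / (d (u i, u (i + 1)) : ℝ) < f (u i, u (i + 1)) ∧
      f (u i, u (i + 1)) < (d (u i, u (i + 1)) : ℝ))
    (C : Finset (V × V))
    (hC : C = Finset.image (fun i : Fin (m + 1) => (u i, u (i + 1))) Finset.univ) :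
    ∃ ε₀ > (0 : ℝ), ∀ ε : ℝ, 0 < ε → ε ≤ ε₀ →
      ∀ f' : V × V → ℝ, (∀ e, f' e = if e ∈ C then (1 + ε) * f e else f e) →
        (∀ v : V, v ≠ s → v ≠ t →
          ∏ e ∈ E.filter (fun e => e.2 = v), f' e
            = ∏ e ∈ E.filter (fun e => e.1 = v), f' e) ∧
        (∀ e ∈ E, 1 / (d e : ℝ) ≤ f' e ∧ f' e ≤ (d e : ℝ)) ∧
        (∏ e ∈ E.filter (fun e => e.1 = s), f' e) /
            (∏ e ∈ E.filter (fun e => e.2 = s), f' e)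
          = (∏ e ∈ E.filter (fun e => e.1 = s), f e) /
            (∏ e ∈ E.filter (fun e => e.2 = s), f e) := by
  change C = cycleEdges u at hC
  subst hC
  have hCE : cycleEdges u ⊆ E := image_subset_iff.2 fun i _ => hcycE i
  obtain ⟨ε₀, hε₀, hsmall⟩ := mem_nhdsGT_iff_exists_Ioc_subset.1 <| nhdsWithin_le_nhds <|
    eventually_forall_one_add_mul_lt fun i => (hstrict i).2
  refine ⟨ε₀, hε₀, fun ε hε hεle f' hf' => ?_⟩
  obtain rfl : f' = fun e => if e ∈ cycleEdges u then (1 + ε) * f e else f e := funext hf'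
  simp only [prod_filter_ite_mem_mul hCE, card_cycleEdges_filter_snd_eq_fst hu]
  refine ⟨fun v hvs hvt => by rw [hcons v hvs hvt], fun e he => ?_,
    mul_div_mul_left _ _ (pow_ne_zero _ (by positivity))⟩
  split_ifs with heC
  · obtain ⟨i, -, rfl⟩ := mem_image.1 heC
    have hf : 0 < f (u i, u (i + 1)) := (by positivity : (0 : ℝ) ≤ _).trans_lt (hstrict i).1
    exact ⟨(hstrict i).1.le.trans (le_mul_of_one_le_left hf.le (by linarith)),
      (hsmall ⟨hε, hεle⟩ i).le⟩
  · exact hcap e he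

/-- Given a multiplicative flow of value `QMC(N)` and a cycle of
edges whose flow values are strictly between `1/d` and `d`, multiplying the flows on
all cycle edges by `1 + ε` for sufficiently small `ε > 0` preserves the conservation
law, the capacity constraints, and the flow value. -/
theorem cycle_perturbation_preserves_flow {V : Type*} [DecidableEq V]
    (E : Finset (V × V)) (hsymm : ∀ u v : V, (u, v) ∈ E → (v, u) ∈ E)
    (d : V × V → ℕ) (hdsymm : ∀ u v : V, d (u, v) = d (v, u))
    (hd2 : ∀ e ∈ E, 2 ≤ d e)
    (s t : V) (hst : s ≠ t)
    (f : V × V → ℝ)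
    (hpos : ∀ e ∈ E, 0 < f e)
    (hcap : ∀ e ∈ E, 1 / (d e : ℝ) ≤ f e ∧ f e ≤ (d e : ℝ))
    (hcons : ∀ v : V, v ≠ s → v ≠ t →
      ∏ e ∈ E.filter (fun e => e.2 = v), f e = ∏ e ∈ E.filter (fun e => e.1 = v), f e)
    (hval : (∏ e ∈ E.filter (fun e => e.1 = s), f e) /
        (∏ e ∈ E.filter (fun e => e.2 = s), f e) = (QMC E d s t : ℝ))
    (m : ℕ) (u : Fin (m + 1) → V) (hu : Function.Injective u)
    (hcycE : ∀ i : Fin (m + 1), (u i, u (i + 1)) ∈ E)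
    (hstrict : ∀ i : Fin (m + 1),
      1 / (d (u i, u (i + 1)) : ℝ) < f (u i, u (i + 1)) ∧
      f (u i, u (i + 1)) < (d (u i, u (i + 1)) : ℝ))
    (C : Finset (V × V))
    (hC : C = Finset.image (fun i : Fin (m + 1) => (u i, u (i + 1))) Finset.univ) :
    ∃ ε₀ > (0 : ℝ), ∀ ε : ℝ, 0 < ε → ε ≤ ε₀ →
      ∀ f' : V × V → ℝ, (∀ e, f' e = if e ∈ C then (1 + ε) * f e else f e) →
        (∀ v : V, v ≠ s → v ≠ t →
          ∏ e ∈ E.filter (fun e => e.2 = v), f' e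
            = ∏ e ∈ E.filter (fun e => e.1 = v), f' e) ∧
        (∀ e ∈ E, 1 / (d e : ℝ) ≤ f' e ∧ f' e ≤ (d e : ℝ)) ∧
        (∏ e ∈ E.filter (fun e => e.1 = s), f' e) /
            (∏ e ∈ E.filter (fun e => e.2 = s), f' e)
          = (∏ e ∈ E.filter (fun e => e.1 = s), f e) /
            (∏ e ∈ E.filter (fun e => e.2 = s), f e) :=
  cycle_perturbation_preserves_flow_general E d s t f hcap hcons m u hu hcycE hstrict C hC
end

section
/- If a quantum tensor network N admits an integer quantum flow f with value equal to QMC(N), then it admits a strict integer quantum flow g (one with g(v,s) = 1 for all edges into the source and g(t,u) = 1 for all edges out of the sink) with value equal to QMC(N). -/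
open Finset

/-- An integer quantum flow. -/
def IsIntQFlow {V : Type*} [DecidableEq V] (E : Finset (V × V)) (d : V × V → ℕ)
    (s t : V) (f : V × V → ℕ) : Prop :=
  (∀ e ∈ E, 1 ≤ f e) ∧
  (∀ e ∈ E, f e * f (e.2, e.1) ≤ d e) ∧
  (∀ v : V, v ≠ s → v ≠ t →
    ∏ e ∈ E.filter (fun e => e.2 = v), f e = ∏ e ∈ E.filter (fun e => e.1 = v), f e)

/-- The value of an integer quantum flow. -/
def qval {V : Type*} [DecidableEq V] (E : Finset (V × V)) (s : V) (f : V × V → ℕ) : ℚ :=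
  (∏ e ∈ E.filter (fun e => e.1 = s), (f e : ℚ)) /
    (∏ e ∈ E.filter (fun e => e.2 = s), (f e : ℚ))

namespace QStrict

variable {V : Type*} [DecidableEq V]

/-- Sum of flow on edges into `v`. -/
def ains (E : Finset (V × V)) (c : V × V → ℕ) (v : V) : ℕ :=
  ∑ e ∈ E.filter (fun e => e.2 = v), c e

/-- Sum of flow on edges out of `v`. -/
def aouts (E : Finset (V × V)) (c : V × V → ℕ) (v : V) : ℕ :=
  ∑ e ∈ E.filter (fun e => e.1 = v), c e

/-- Decrement flow on one edge. -/
def dec (c : V × V → ℕ) (e₀ : V × V) : V × V → ℕ := Function.update c e₀ (c e₀ - 1)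

lemma dec_le (c : V × V → ℕ) (e₀ : V × V) : ∀ e, dec c e₀ e ≤ c e := by
  intro e
  rcases eq_or_ne e e₀ with h | h
  · subst h; simp [dec]
  · simp [dec, Function.update_of_ne h]

lemma sum_dec_mem {S : Finset (V × V)} {e₀ : V × V} {c : V × V → ℕ}
    (h : e₀ ∈ S) (h1 : 1 ≤ c e₀) :
    (∑ e ∈ S, dec c e₀ e) + 1 = ∑ e ∈ S, c e := by
  rw [show (∑ e ∈ S, dec c e₀ e) = (c e₀ - 1) + ∑ e ∈ S \ {e₀}, c e from ?_,
      Finset.sum_eq_sum_sdiff_singleton_add h c]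
  · omega
  · rw [dec, Finset.sum_update_of_mem h]

lemma sum_dec_notMem {S : Finset (V × V)} {e₀ : V × V} {c : V × V → ℕ}
    (h : e₀ ∉ S) :
    (∑ e ∈ S, dec c e₀ e) = ∑ e ∈ S, c e := by
  refine Finset.sum_congr rfl fun e he => ?_
  have : e ≠ e₀ := fun h' => h (h' ▸ he)
  simp [dec, Function.update_of_ne this]

lemma ains_dec_self {E : Finset (V × V)} {c : V × V → ℕ} {a b : V}
    (he : (a, b) ∈ E) (h1 : 1 ≤ c (a, b)) :
    ains E (dec c (a, b)) b + 1 = ains E c b :=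
  sum_dec_mem (by simp [Finset.mem_filter, he]) h1

lemma ains_dec_ne {E : Finset (V × V)} {c : V × V → ℕ} {a b w : V} (h : b ≠ w) :
    ains E (dec c (a, b)) w = ains E c w :=
  sum_dec_notMem (by simp [Finset.mem_filter, h])

lemma aouts_dec_self {E : Finset (V × V)} {c : V × V → ℕ} {a b : V}
    (he : (a, b) ∈ E) (h1 : 1 ≤ c (a, b)) :
    aouts E (dec c (a, b)) a + 1 = aouts E c a :=
  sum_dec_mem (by simp [Finset.mem_filter, he]) h1

lemma aouts_dec_ne {E : Finset (V × V)} {c : V × V → ℕ} {a b w : V} (h : a ≠ w) :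
    aouts E (dec c (a, b)) w = aouts E c w :=
  sum_dec_notMem (by simp [Finset.mem_filter, h])

lemma exists_pos_of_ains {E : Finset (V × V)} {c : V × V → ℕ} {v : V}
    (h : 0 < ains E c v) : ∃ u, (u, v) ∈ E ∧ 0 < c (u, v) := by
  obtain ⟨e, he, hne⟩ := Finset.exists_ne_zero_of_sum_ne_zero (by omega : ains E c v ≠ 0)
  obtain ⟨a, b⟩ := e
  obtain ⟨heE, hb⟩ := Finset.mem_filter.1 he
  subst hb
  exact ⟨a, heE, Nat.pos_of_ne_zero hne⟩

lemma exists_pos_of_aouts {E : Finset (V × V)} {c : V × V → ℕ} {v : V}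
    (h : 0 < aouts E c v) : ∃ w, (v, w) ∈ E ∧ 0 < c (v, w) := by
  obtain ⟨e, he, hne⟩ := Finset.exists_ne_zero_of_sum_ne_zero (by omega : aouts E c v ≠ 0)
  obtain ⟨a, b⟩ := e
  obtain ⟨heE, ha⟩ := Finset.mem_filter.1 he
  subst ha
  exact ⟨b, heE, Nat.pos_of_ne_zero hne⟩

lemma edge_zero_of_ains_zero {E : Finset (V × V)} {c : V × V → ℕ} {u v : V}
    (h : ains E c v = 0) (he : (u, v) ∈ E) : c (u, v) = 0 := by
  have : c (u, v) ≤ ains E c v :=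
    Finset.single_le_sum (fun e _ => Nat.zero_le _) (by simp [Finset.mem_filter, he])
  omega

lemma edge_zero_of_aouts_zero {E : Finset (V × V)} {c : V × V → ℕ} {u v : V}
    (h : aouts E c u = 0) (he : (u, v) ∈ E) : c (u, v) = 0 := by
  have : c (u, v) ≤ aouts E c u :=
    Finset.single_le_sum (fun e _ => Nat.zero_le _) (by simp [Finset.mem_filter, he])
  omega

lemma ains_mono {E : Finset (V × V)} {c c' : V × V → ℕ} (h : ∀ e, c' e ≤ c e) (v : V) :
    ains E c' v ≤ ains E c v :=
  Finset.sum_le_sum fun e _ => h e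

lemma aouts_mono {E : Finset (V × V)} {c c' : V × V → ℕ} (h : ∀ e, c' e ≤ c e) (v : V) :
    aouts E c' v ≤ aouts E c v :=
  Finset.sum_le_sum fun e _ => h e

lemma ains_le_tot {E : Finset (V × V)} (c : V × V → ℕ) (v : V) :
    ains E c v ≤ ∑ e ∈ E, c e :=
  Finset.sum_le_sum_of_subset (Finset.filter_subset _ _)

lemma aouts_le_tot {E : Finset (V × V)} (c : V × V → ℕ) (v : V) :
    aouts E c v ≤ ∑ e ∈ E, c e :=
  Finset.sum_le_sum_of_subset (Finset.filter_subset _ _)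

variable {V : Type*} [DecidableEq V]

/-- Forward walk-and-subtract: starting at an internal vertex `v` with one unit of
excess outflow, subtract a walk until it reaches `t`.  Requires no inflow at `s`. -/
lemma fwalk (E : Finset (V × V)) (s t : V) (hst : s ≠ t) :
    ∀ n : ℕ, ∀ c : V × V → ℕ, ∀ v : V,
    (∑ e ∈ E, c e) ≤ n →
    (∀ w, w ≠ s → w ≠ t → w ≠ v → ains E c w = aouts E c w) →
    v ≠ s → v ≠ t → ains E c v + 1 = aouts E c v →
    ains E c s = 0 →
    ∃ c', (∀ e, c' e ≤ c e) ∧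
      (∀ w, w ≠ s → w ≠ t → ains E c' w = aouts E c' w) ∧
      ains E c' s = 0 ∧ aouts E c' s = aouts E c s := by
  intro n
  induction n with
  | zero =>
    intro c v hn hcons hvs hvt hv h0
    exfalso
    have h1 : aouts E c v ≤ ∑ e ∈ E, c e := aouts_le_tot c v
    omega
  | succ n ih =>
    intro c v hn hcons hvs hvt hv h0
    obtain ⟨w, hwE, hwpos⟩ := exists_pos_of_aouts (show 0 < aouts E c v by omega)
    have hws : w ≠ s := by
      intro h; subst h
      have := edge_zero_of_ains_zero h0 hwE; omega
    have h1 : 1 ≤ c (v, w) := hwpos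
    set c₁ := dec c (v, w) with hc₁
    have hle : ∀ e, c₁ e ≤ c e := dec_le c (v, w)
    have htot : (∑ e ∈ E, c₁ e) + 1 = ∑ e ∈ E, c e := sum_dec_mem hwE h1
    have haoutv : aouts E c₁ v + 1 = aouts E c v := aouts_dec_self hwE h1
    have hainw : ains E c₁ w + 1 = ains E c w := ains_dec_self hwE h1
    by_cases hwt : w = t
    · subst hwt
      refine ⟨c₁, hle, ?_, ?_, ?_⟩
      · intro x hxs hxt
        by_cases hxv : x = v
        · subst hxv
          have h2 : ains E c₁ x = ains E c x := ains_dec_ne (fun h => hxt h.symm)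
          omega
        · have h2 : ains E c₁ x = ains E c x := ains_dec_ne (fun h => hxt h.symm)
          have h3 : aouts E c₁ x = aouts E c x := aouts_dec_ne (fun h => hxv h.symm)
          rw [h2, h3]; exact hcons x hxs hxt hxv
      · exact (ains_dec_ne hst.symm).trans h0
      · exact aouts_dec_ne hvs
    · -- continue the walk from w
      have hcons₁ : ∀ x, x ≠ s → x ≠ t → x ≠ w → ains E c₁ x = aouts E c₁ x := by
        intro x hxs hxt hxw
        by_cases hxv : x = v
        · subst hxv
          have h2 : ains E c₁ x = ains E c x := ains_dec_ne (fun h => hxw h.symm)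
          omega
        · have h2 : ains E c₁ x = ains E c x := ains_dec_ne (fun h => hxw h.symm)
          have h3 : aouts E c₁ x = aouts E c x := aouts_dec_ne (fun h => hxv h.symm)
          rw [h2, h3]; exact hcons x hxs hxt hxv
      have hinv : ains E c₁ w + 1 = aouts E c₁ w := by
        by_cases hwv : w = v
        · subst hwv; omega
        · have h3 : aouts E c₁ w = aouts E c w := aouts_dec_ne (fun h => hwv h.symm)
          have h4 : ains E c w = aouts E c w := hcons w hws hwt hwv
          omega
      have h0₁ : ains E c₁ s = 0 := by rw [ains_dec_ne hws]; exact h0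
      obtain ⟨c', hle', hcons', h0', houts'⟩ :=
        ih c₁ w (by omega) hcons₁ hws hwt hinv h0₁
      refine ⟨c', fun e => le_trans (hle' e) (hle e), hcons', h0', ?_⟩
      rw [houts']; exact aouts_dec_ne hvs

/-- Backward walk-and-subtract: starting at an internal vertex `v` with one unit of
excess inflow, subtract a backward walk until it reaches `s` or `t`. -/
lemma bwalk (E : Finset (V × V)) (s t : V) (hst : s ≠ t) :
    ∀ n : ℕ, ∀ c : V × V → ℕ, ∀ v : V,
    (∑ e ∈ E, c e) ≤ n →
    (∀ w, w ≠ s → w ≠ t → w ≠ v → ains E c w = aouts E c w) →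
    v ≠ s → v ≠ t → ains E c v = aouts E c v + 1 →
    ∃ c', (∀ e, c' e ≤ c e) ∧
      (∀ w, w ≠ s → w ≠ t → ains E c' w = aouts E c' w) ∧
      ains E c' s = ains E c s ∧
      ((aouts E c' s + 1 = aouts E c s ∧ aouts E c' t = aouts E c t) ∨
       (aouts E c' s = aouts E c s ∧ aouts E c' t + 1 = aouts E c t)) := by
  intro n
  induction n with
  | zero =>
    intro c v hn hcons hvs hvt hv
    exfalso
    have h1 : ains E c v ≤ ∑ e ∈ E, c e := ains_le_tot c v
    omega
  | succ n ih =>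
    intro c v hn hcons hvs hvt hv
    obtain ⟨u, huE, hupos⟩ := exists_pos_of_ains (show 0 < ains E c v by omega)
    have h1 : 1 ≤ c (u, v) := hupos
    set c₁ := dec c (u, v) with hc₁
    have hle : ∀ e, c₁ e ≤ c e := dec_le c (u, v)
    have htot : (∑ e ∈ E, c₁ e) + 1 = ∑ e ∈ E, c e := sum_dec_mem huE h1
    have hainv : ains E c₁ v + 1 = ains E c v := ains_dec_self huE h1
    have haoutu : aouts E c₁ u + 1 = aouts E c u := aouts_dec_self huE h1
    have hains : ains E c₁ s = ains E c s := ains_dec_ne hvs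
    have hcons_aux : ∀ x, x ≠ s → x ≠ t → x ≠ u → ains E c₁ x = aouts E c₁ x := by
      intro x hxs hxt hxu
      by_cases hxv : x = v
      · subst hxv
        have h3 : aouts E c₁ x = aouts E c x := aouts_dec_ne (fun h => hxu h.symm)
        omega
      · have h2 : ains E c₁ x = ains E c x := ains_dec_ne (fun h => hxv h.symm)
        have h3 : aouts E c₁ x = aouts E c x := aouts_dec_ne (fun h => hxu h.symm)
        rw [h2, h3]; exact hcons x hxs hxt hxv
    by_cases hus : u = s
    · subst hus
      refine ⟨c₁, hle, ?_, hains, Or.inl ⟨haoutu, aouts_dec_ne hst⟩⟩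
      intro x hxs hxt
      exact hcons_aux x hxs hxt hxs
    · by_cases hut : u = t
      · subst hut
        refine ⟨c₁, hle, ?_, hains, Or.inr ⟨aouts_dec_ne hst.symm, haoutu⟩⟩
        intro x hxs hxt
        exact hcons_aux x hxs hxt hxt
      · -- u is internal: continue the backward walk
        have hinv : ains E c₁ u = aouts E c₁ u + 1 := by
          by_cases huv : u = v
          · subst huv; omega
          · have h2 : ains E c₁ u = ains E c u := ains_dec_ne (fun h => huv h.symm)
            have h4 : ains E c u = aouts E c u := hcons u hus hut huv
            omega
        obtain ⟨c', hle', hcons', hains', hd⟩ :=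
          ih c₁ u (by omega) hcons_aux hus hut hinv
        refine ⟨c', fun e => le_trans (hle' e) (hle e), hcons', hains'.trans hains, ?_⟩
        have h5 : aouts E c₁ s = aouts E c s := aouts_dec_ne hus
        have h6 : aouts E c₁ t = aouts E c t := aouts_dec_ne hut
        rcases hd with ⟨ha, hb⟩ | ⟨ha, hb⟩
        · exact Or.inl ⟨by omega, by omega⟩
        · exact Or.inr ⟨by omega, by omega⟩

/-- Reduce the value of a source-strict flow by one, by subtracting an `s`-`t` walk. -/
lemma reduceVal (E : Finset (V × V)) (s t : V) (hst : s ≠ t) (c : V × V → ℕ) (k : ℕ)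
    (hcons : ∀ w, w ≠ s → w ≠ t → ains E c w = aouts E c w)
    (h0 : ains E c s = 0) (hk : aouts E c s = k + 1) :
    ∃ c', (∀ e, c' e ≤ c e) ∧
      (∀ w, w ≠ s → w ≠ t → ains E c' w = aouts E c' w) ∧
      ains E c' s = 0 ∧ aouts E c' s = k := by
  obtain ⟨w, hwE, hwpos⟩ := exists_pos_of_aouts (show 0 < aouts E c s by omega)
  have hws : w ≠ s := by
    intro h; subst h
    have := edge_zero_of_ains_zero h0 hwE; omega
  have h1 : 1 ≤ c (s, w) := hwpos
  set c₁ := dec c (s, w) with hc₁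
  have hle : ∀ e, c₁ e ≤ c e := dec_le c (s, w)
  have haouts : aouts E c₁ s + 1 = aouts E c s := aouts_dec_self hwE h1
  have hains : ains E c₁ s = ains E c s := ains_dec_ne hws
  have hcons_aux : ∀ x, x ≠ s → x ≠ w → ains E c₁ x = aouts E c₁ x → True := fun _ _ _ _ => trivial
  by_cases hwt : w = t
  · subst hwt
    refine ⟨c₁, hle, ?_, by omega, by omega⟩
    intro x hxs hxt
    have h2 : ains E c₁ x = ains E c x := ains_dec_ne (fun h => hxt h.symm)
    have h3 : aouts E c₁ x = aouts E c x := aouts_dec_ne (fun h => hxs h.symm)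
    rw [h2, h3]; exact hcons x hxs hxt
  · have hcons₁ : ∀ x, x ≠ s → x ≠ t → x ≠ w → ains E c₁ x = aouts E c₁ x := by
      intro x hxs hxt hxw
      have h2 : ains E c₁ x = ains E c x := ains_dec_ne (fun h => hxw h.symm)
      have h3 : aouts E c₁ x = aouts E c x := aouts_dec_ne (fun h => hxs h.symm)
      rw [h2, h3]; exact hcons x hxs hxt
    have hinv : ains E c₁ w + 1 = ains E c w := ains_dec_self hwE h1
    have hinv2 : ains E c₁ w + 1 = aouts E c₁ w := by
      have h3 : aouts E c₁ w = aouts E c w := aouts_dec_ne (Ne.symm hws)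
      have h4 : ains E c w = aouts E c w := hcons w hws hwt
      omega
    have h0₁ : ains E c₁ s = 0 := by omega
    obtain ⟨c', hle', hcons', h0', houts'⟩ :=
      fwalk E s t hst (∑ e ∈ E, c₁ e) c₁ w le_rfl hcons₁ hws hwt hinv2 h0₁
    exact ⟨c', fun e => le_trans (hle' e) (hle e), hcons', h0', by omega⟩

/-- Main additive strictification lemma. -/
lemma strictify (E : Finset (V × V)) (s t : V) (hst : s ≠ t) :
    ∀ n : ℕ, ∀ c : V × V → ℕ, ∀ k : ℕ,
    (∑ e ∈ E, c e) ≤ n →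
    (∀ w, w ≠ s → w ≠ t → ains E c w = aouts E c w) →
    aouts E c s = ains E c s + k →
    ∃ c', (∀ e, c' e ≤ c e) ∧
      (∀ w, w ≠ s → w ≠ t → ains E c' w = aouts E c' w) ∧
      ains E c' s = 0 ∧ aouts E c' s = k ∧ aouts E c' t = 0 := by
  intro n
  induction n with
  | zero =>
    intro c k hn hcons hk
    have h1 : ains E c s ≤ ∑ e ∈ E, c e := ains_le_tot c s
    have h2 : aouts E c t ≤ ∑ e ∈ E, c e := aouts_le_tot c t
    have h3 : aouts E c s ≤ ∑ e ∈ E, c e := aouts_le_tot c s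
    exact ⟨c, fun e => le_rfl, hcons, by omega, by omega, by omega⟩
  | succ n ih =>
    intro c k hn hcons hk
    by_cases hpos : 0 < ains E c s
    · obtain ⟨u, huE, hupos⟩ := exists_pos_of_ains hpos
      have h1 : 1 ≤ c (u, s) := hupos
      set c₁ := dec c (u, s) with hc₁
      have hle : ∀ e, c₁ e ≤ c e := dec_le c (u, s)
      have htot : (∑ e ∈ E, c₁ e) + 1 = ∑ e ∈ E, c e := sum_dec_mem huE h1
      have hains : ains E c₁ s + 1 = ains E c s := ains_dec_self huE h1
      by_cases hus : u = s
      · -- self-loop at s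
        have hus' : s = u := hus.symm
        subst hus'
        have haouts : aouts E c₁ s + 1 = aouts E c s := aouts_dec_self huE h1
        have hcons₁ : ∀ w, w ≠ s → w ≠ t → ains E c₁ w = aouts E c₁ w := by
          intro x hxs hxt
          have h2 : ains E c₁ x = ains E c x := ains_dec_ne (fun h => hxs h.symm)
          have h3 : aouts E c₁ x = aouts E c x := aouts_dec_ne (fun h => hxs h.symm)
          rw [h2, h3]; exact hcons x hxs hxt
        obtain ⟨c', hle', hcons', h0', houts', houtt'⟩ :=
          ih c₁ k (by omega) hcons₁ (by omega)
        exact ⟨c', fun e => le_trans (hle' e) (hle e), hcons', h0', houts', houtt'⟩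
      · by_cases hut : u = t
        · -- edge from t directly into s
          have hut' : t = u := hut.symm
          subst hut'
          have haouts : aouts E c₁ s = aouts E c s := aouts_dec_ne hst.symm
          have hcons₁ : ∀ w, w ≠ s → w ≠ t → ains E c₁ w = aouts E c₁ w := by
            intro x hxs hxt
            have h2 : ains E c₁ x = ains E c x := ains_dec_ne (fun h => hxs h.symm)
            have h3 : aouts E c₁ x = aouts E c x := aouts_dec_ne (fun h => hxt h.symm)
            rw [h2, h3]; exact hcons x hxs hxt
          obtain ⟨c₂, hle₂, hcons₂, h0₂, houts₂, houtt₂⟩ :=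
            ih c₁ (k + 1) (by omega) hcons₁ (by omega)
          obtain ⟨c₃, hle₃, hcons₃, h0₃, houts₃⟩ :=
            reduceVal E s t hst c₂ k hcons₂ h0₂ houts₂
          refine ⟨c₃, fun e => le_trans (hle₃ e) (le_trans (hle₂ e) (hle e)),
            hcons₃, h0₃, houts₃, ?_⟩
          have := aouts_mono (E := E) hle₃ t
          omega
        · -- u internal: backward walk from u
          have haoutu : aouts E c₁ u + 1 = aouts E c u := aouts_dec_self huE h1
          have hcons₁ : ∀ x, x ≠ s → x ≠ t → x ≠ u → ains E c₁ x = aouts E c₁ x := by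
            intro x hxs hxt hxu
            have h2 : ains E c₁ x = ains E c x := ains_dec_ne (fun h => hxs h.symm)
            have h3 : aouts E c₁ x = aouts E c x := aouts_dec_ne (fun h => hxu h.symm)
            rw [h2, h3]; exact hcons x hxs hxt
          have hinvu : ains E c₁ u = aouts E c₁ u + 1 := by
            have h2 : ains E c₁ u = ains E c u := ains_dec_ne (fun h => hus h.symm)
            have h4 : ains E c u = aouts E c u := hcons u hus hut
            omega
          obtain ⟨c₂, hle₂, hcons₂, hains₂, hd⟩ :=
            bwalk E s t hst (∑ e ∈ E, c₁ e) c₁ u le_rfl hcons₁ hus hut hinvu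
          have hains₁s : ains E c₁ s + 1 = ains E c s := hains
          have haouts₁ : aouts E c₁ s = aouts E c s := aouts_dec_ne hus
          have haoutt₁ : aouts E c₁ t = aouts E c t := aouts_dec_ne hut
          have htot₂ : (∑ e ∈ E, c₂ e) ≤ ∑ e ∈ E, c₁ e := Finset.sum_le_sum fun e _ => hle₂ e
          rcases hd with ⟨ha, hb⟩ | ⟨ha, hb⟩
          · -- exited at s : value preserved
            obtain ⟨c', hle', hcons', h0', houts', houtt'⟩ :=
              ih c₂ k (by omega) hcons₂ (by omega)
            exact ⟨c', fun e => le_trans (hle' e) (le_trans (hle₂ e) (hle e)),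
              hcons', h0', houts', houtt'⟩
          · -- exited at t : value goes up by one, reduce afterwards
            obtain ⟨c₃, hle₃, hcons₃, h0₃, houts₃, houtt₃⟩ :=
              ih c₂ (k + 1) (by omega) hcons₂ (by omega)
            obtain ⟨c₄, hle₄, hcons₄, h0₄, houts₄⟩ :=
              reduceVal E s t hst c₃ k hcons₃ h0₃ houts₃
            refine ⟨c₄, fun e => le_trans (hle₄ e) (le_trans (hle₃ e)
              (le_trans (hle₂ e) (hle e))), hcons₄, h0₄, houts₄, ?_⟩
            have := aouts_mono (E := E) hle₄ t
            omega
    · have h0 : ains E c s = 0 := by omega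
      by_cases hpt : 0 < aouts E c t
      · obtain ⟨w, hwE, hwpos⟩ := exists_pos_of_aouts hpt
        have h1 : 1 ≤ c (t, w) := hwpos
        set c₁ := dec c (t, w) with hc₁
        have hle : ∀ e, c₁ e ≤ c e := dec_le c (t, w)
        have htot : (∑ e ∈ E, c₁ e) + 1 = ∑ e ∈ E, c e := sum_dec_mem hwE h1
        have hains₁ : ains E c₁ s = ains E c s := by
          by_cases hws : w = s
          · exact absurd (edge_zero_of_ains_zero h0 (hws ▸ hwE)) (by subst hws; omega)
          · exact ains_dec_ne hws
        have haouts₁ : aouts E c₁ s = aouts E c s := aouts_dec_ne hst.symm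
        by_cases hwt : w = t
        · -- self-loop at t
          have hwt' : t = w := hwt.symm
          subst hwt'
          have hcons₁ : ∀ x, x ≠ s → x ≠ t → ains E c₁ x = aouts E c₁ x := by
            intro x hxs hxt
            have h2 : ains E c₁ x = ains E c x := ains_dec_ne (fun h => hxt h.symm)
            have h3 : aouts E c₁ x = aouts E c x := aouts_dec_ne (fun h => hxt h.symm)
            rw [h2, h3]; exact hcons x hxs hxt
          obtain ⟨c', hle', hcons', h0', houts', houtt'⟩ :=
            ih c₁ k (by omega) hcons₁ (by omega)
          exact ⟨c', fun e => le_trans (hle' e) (hle e), hcons', h0', houts', houtt'⟩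
        · have hws : w ≠ s := by
            intro h; subst h
            have := edge_zero_of_ains_zero h0 hwE; omega
          have hcons₁ : ∀ x, x ≠ s → x ≠ t → x ≠ w → ains E c₁ x = aouts E c₁ x := by
            intro x hxs hxt hxw
            have h2 : ains E c₁ x = ains E c x := ains_dec_ne (fun h => hxw h.symm)
            have h3 : aouts E c₁ x = aouts E c x := aouts_dec_ne (fun h => hxt h.symm)
            rw [h2, h3]; exact hcons x hxs hxt
          have hinvw : ains E c₁ w + 1 = aouts E c₁ w := by
            have h2 : ains E c₁ w + 1 = ains E c w := ains_dec_self hwE h1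
            have h3 : aouts E c₁ w = aouts E c w := aouts_dec_ne (fun h => hwt h.symm)
            have h4 : ains E c w = aouts E c w := hcons w hws hwt
            omega
          have h0₁ : ains E c₁ s = 0 := by omega
          obtain ⟨c₂, hle₂, hcons₂, h0₂, houts₂⟩ :=
            fwalk E s t hst (∑ e ∈ E, c₁ e) c₁ w le_rfl hcons₁ hws hwt hinvw h0₁
          have htot₂ : (∑ e ∈ E, c₂ e) ≤ ∑ e ∈ E, c₁ e := Finset.sum_le_sum fun e _ => hle₂ e
          obtain ⟨c', hle', hcons', h0', houts', houtt'⟩ :=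
            ih c₂ k (by omega) hcons₂ (by omega)
          exact ⟨c', fun e => le_trans (hle' e) (le_trans (hle₂ e) (hle e)),
            hcons', h0', houts', houtt'⟩
      · exact ⟨c, fun e => le_rfl, hcons, h0, by omega, by omega⟩
end QStrict


/-- If a quantum tensor network admits an integer quantum flow of
value `QMC(N)`, then it admits a *strict* integer quantum flow (no incoming flow at
the source and no outgoing flow at the sink) of value `QMC(N)`. -/
theorem strict_flow_from_flow {V : Type*} [DecidableEq V]
    (E : Finset (V × V)) (hsymm : ∀ u v : V, (u, v) ∈ E → (v, u) ∈ E)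
    (d : V × V → ℕ) (hdsymm : ∀ u v : V, d (u, v) = d (v, u))
    (hd2 : ∀ e ∈ E, 2 ≤ d e)
    (s t : V) (hst : s ≠ t)
    (f : V × V → ℕ) (hf : IsIntQFlow E d s t f)
    (hval : qval E s f = (QMC E d s t : ℚ)) :
    ∃ g : V × V → ℕ, IsIntQFlow E d s t g ∧
      (∀ v : V, (v, s) ∈ E → g (v, s) = 1) ∧
      (∀ u : V, (t, u) ∈ E → g (t, u) = 1) ∧
      qval E s g = (QMC E d s t : ℚ) := by
  classical
  obtain ⟨hf1, hf2, hf3⟩ := hf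
  set Q := QMC E d s t with hQdef
  -- the two products at the source
  have hApos : 0 < ∏ e ∈ E.filter (fun e => e.1 = s), f e :=
    Finset.prod_pos fun e he => hf1 e (Finset.mem_filter.1 he).1
  have hBpos : 0 < ∏ e ∈ E.filter (fun e => e.2 = s), f e :=
    Finset.prod_pos fun e he => hf1 e (Finset.mem_filter.1 he).1
  have hAB : (∏ e ∈ E.filter (fun e => e.1 = s), f e)
      = Q * ∏ e ∈ E.filter (fun e => e.2 = s), f e := by
    have hB0 : (∏ e ∈ E.filter (fun e => e.2 = s), ((f e : ℚ))) ≠ 0 := by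
      rw [← Nat.cast_prod]
      exact_mod_cast hBpos.ne'
    rw [qval, div_eq_iff hB0] at hval
    exact_mod_cast hval
  have hQpos : 0 < Q := by
    rcases Nat.eq_zero_or_pos Q with h | h
    · rw [h, zero_mul] at hAB; omega
    · exact h
  set M := ∏ e ∈ E, f e with hMdef
  have hMpos : 0 < M := Finset.prod_pos fun e he => hf1 e he
  have hAM : (∏ e ∈ E.filter (fun e => e.1 = s), f e) ∣ M :=
    Finset.prod_dvd_prod_of_subset _ _ f (Finset.filter_subset _ _)
  have hQM : Q ∣ M := dvd_trans (Dvd.intro _ hAB.symm) hAM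
  set P := M.primeFactors with hPdef
  -- the additive flows, one for each prime
  set c : ℕ → (V × V) → ℕ := fun p e => if e ∈ E then (f e).factorization p else 0
    with hcdef
  have hsum_in : ∀ (p : ℕ) (v : V), QStrict.ains E (c p) v
      = ((∏ e ∈ E.filter (fun e => e.2 = v), f e).factorization) p := by
    intro p v
    rw [Nat.factorization_prod (fun e he => Nat.one_le_iff_ne_zero.mp (hf1 e (Finset.mem_filter.1 he).1)),
      Finsupp.finset_sum_apply]
    exact Finset.sum_congr rfl fun e he => by
      simp [hcdef, (Finset.mem_filter.1 he).1]
  have hsum_out : ∀ (p : ℕ) (v : V), QStrict.aouts E (c p) v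
      = ((∏ e ∈ E.filter (fun e => e.1 = v), f e).factorization) p := by
    intro p v
    rw [Nat.factorization_prod (fun e he => Nat.one_le_iff_ne_zero.mp (hf1 e (Finset.mem_filter.1 he).1)),
      Finsupp.finset_sum_apply]
    exact Finset.sum_congr rfl fun e he => by
      simp [hcdef, (Finset.mem_filter.1 he).1]
  have hex : ∀ p : ℕ, ∃ c', (∀ e, c' e ≤ c p e) ∧
      (∀ w, w ≠ s → w ≠ t → QStrict.ains E c' w = QStrict.aouts E c' w) ∧
      QStrict.ains E c' s = 0 ∧ QStrict.aouts E c' s = Q.factorization p ∧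
      QStrict.aouts E c' t = 0 := by
    intro p
    refine QStrict.strictify E s t hst (∑ e ∈ E, c p e) (c p) (Q.factorization p)
      le_rfl ?_ ?_
    · intro w hws hwt
      rw [hsum_in, hsum_out, hf3 w hws hwt]
    · rw [hsum_in, hsum_out, hAB,
        Nat.factorization_mul hQpos.ne' hBpos.ne', Finsupp.add_apply]
      omega
  choose c' hle hcons h0 houts houtt using hex
  -- the new multiplicative flow
  set g : V × V → ℕ := fun e => if e ∈ E then ∏ p ∈ P, p ^ (c' p e) else 1 with hgdef
  -- rebuilding a number from its exponents over P
  have hrebuild : ∀ m : ℕ, m ≠ 0 → m ∣ M → m = ∏ p ∈ P, p ^ m.factorization p := by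
    intro m hm0 hmM
    conv_lhs => rw [← Nat.factorization_prod_pow_eq_self hm0]
    exact Finsupp.prod_of_support_subset _
      (by rw [Nat.support_factorization]; exact Nat.primeFactors_mono hmM hMpos.ne')
      _ (fun p _ => pow_zero p)
  have hfP : ∀ e ∈ E, f e = ∏ p ∈ P, p ^ (c p e) := by
    intro e he
    have h1 : ∀ p ∈ P, p ^ (c p e) = p ^ ((f e).factorization p) := fun p _ => by
      simp [hcdef, he]
    rw [Finset.prod_congr rfl h1]
    exact hrebuild (f e) (Nat.one_le_iff_ne_zero.mp (hf1 e he))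
      (Finset.dvd_prod_of_mem f he)
  have hg_dvd : ∀ e ∈ E, g e ∣ f e := by
    intro e he
    rw [hgdef]
    simp only [he, if_true]
    rw [hfP e he]
    exact Finset.prod_dvd_prod_of_dvd _ _ fun p _ => pow_dvd_pow p (hle p e)
  have hg_pos : ∀ e ∈ E, 1 ≤ g e := fun e he =>
    Nat.pos_of_dvd_of_pos (hg_dvd e he) (hf1 e he)
  -- products of g over subsets of E
  have hg_prod : ∀ S : Finset (V × V), S ⊆ E →
      ∏ e ∈ S, g e = ∏ p ∈ P, p ^ (∑ e ∈ S, c' p e) := by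
    intro S hS
    calc ∏ e ∈ S, g e = ∏ e ∈ S, ∏ p ∈ P, p ^ (c' p e) :=
          Finset.prod_congr rfl fun e he => by rw [hgdef]; simp [hS he]
      _ = ∏ p ∈ P, ∏ e ∈ S, p ^ (c' p e) := Finset.prod_comm
      _ = ∏ p ∈ P, p ^ (∑ e ∈ S, c' p e) :=
          Finset.prod_congr rfl fun p _ => Finset.prod_pow_eq_pow_sum _ _ _
  -- strictness at the source and the sink
  have hg_src : ∀ v : V, (v, s) ∈ E → g (v, s) = 1 := by
    intro v he
    rw [hgdef]
    simp only [he, if_true]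
    refine Finset.prod_eq_one fun p _ => ?_
    rw [QStrict.edge_zero_of_ains_zero (h0 p) he, pow_zero]
  have hg_snk : ∀ u : V, (t, u) ∈ E → g (t, u) = 1 := by
    intro u he
    rw [hgdef]
    simp only [he, if_true]
    refine Finset.prod_eq_one fun p _ => ?_
    rw [QStrict.edge_zero_of_aouts_zero (houtt p) he, pow_zero]
  -- the value of g
  have hnum : ∏ e ∈ E.filter (fun e => e.1 = s), g e = Q := by
    rw [hg_prod _ (Finset.filter_subset _ _)]
    have : ∀ p : ℕ, (∑ e ∈ E.filter (fun e => e.1 = s), c' p e)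
        = Q.factorization p := fun p => houts p
    rw [Finset.prod_congr rfl fun p _ => by rw [this p]]
    exact (hrebuild Q hQpos.ne' hQM).symm
  have hden : ∏ e ∈ E.filter (fun e => e.2 = s), g e = 1 := by
    refine Finset.prod_eq_one fun e he => ?_
    obtain ⟨heE, hes⟩ := Finset.mem_filter.1 he
    have : e = (e.1, s) := by rw [← hes, Prod.mk.eta]
    rw [this] at heE ⊢
    exact hg_src e.1 heE
  refine ⟨g, ⟨hg_pos, ?_, ?_⟩, hg_src, hg_snk, ?_⟩
  · -- capacity
    intro e he
    have hrev : (e.2, e.1) ∈ E := hsymm e.1 e.2 (by rwa [Prod.mk.eta])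
    calc g e * g (e.2, e.1) ≤ f e * f (e.2, e.1) :=
          Nat.mul_le_mul (Nat.le_of_dvd (hf1 e he) (hg_dvd e he))
            (Nat.le_of_dvd (hf1 _ hrev) (hg_dvd _ hrev))
      _ ≤ d e := hf2 e he
  · -- conservation
    intro v hvs hvt
    rw [hg_prod _ (Finset.filter_subset _ _), hg_prod _ (Finset.filter_subset _ _)]
    exact Finset.prod_congr rfl fun p _ => by rw [show (∑ e ∈ E.filter (fun e => e.2 = v), c' p e) = ∑ e ∈ E.filter (fun e => e.1 = v), c' p e from hcons p v hvs hvt]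
  · -- value
    rw [qval, ← Nat.cast_prod, ← Nat.cast_prod, hnum, hden]
    simp
end

section
/- If f is an integer quantum flow whose value equals QMC(N), then for every minimum cut (S̄, T̄) and every crossing edge {v,w} with v ∈ S̄, w ∈ T̄, one has f(v,w) = d(v,w) and f(w,v) = 1. -/
open Finset

/-- Termwise equality from equality of products of naturals with termwise `≤`
and positivity. -/
lemma aux_prod_eq_of_le {α : Type*} {s : Finset α} {g h : α → ℕ}
    (hle : ∀ i ∈ s, g i ≤ h i) (hpos : ∀ i ∈ s, 0 < g i)
    (heq : ∏ i ∈ s, g i = ∏ i ∈ s, h i) : ∀ i ∈ s, g i = h i := by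
  classical
  induction s using Finset.induction_on with
  | empty => simp
  | @insert a s ha ih =>
    rw [Finset.prod_insert ha, Finset.prod_insert ha] at heq
    have hga : 0 < g a := hpos a (Finset.mem_insert_self a s)
    have hpg : 0 < ∏ i ∈ s, g i :=
      Finset.prod_pos fun i hi => hpos i (Finset.mem_insert_of_mem hi)
    have hle' : ∏ i ∈ s, g i ≤ ∏ i ∈ s, h i :=
      Finset.prod_le_prod (fun i hi => Nat.zero_le _)
        (fun i hi => hle i (Finset.mem_insert_of_mem hi))
    have hga' : g a ≤ h a := hle a (Finset.mem_insert_self a s)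
    have h1 : g a = h a := by
      by_contra hc
      have : g a < h a := lt_of_le_of_ne hga' hc
      have : g a * ∏ i ∈ s, g i < h a * ∏ i ∈ s, h i :=
        Nat.mul_lt_mul_of_lt_of_le this hle' (lt_of_lt_of_le hpg hle')
      omega
    have h2 : ∏ i ∈ s, g i = ∏ i ∈ s, h i := by
      rw [h1] at heq
      have hha : 0 < h a := lt_of_lt_of_le hga hga'
      exact Nat.eq_of_mul_eq_mul_left hha heq
    intro i hi
    rcases Finset.mem_insert.mp hi with rfl | hi
    · exact h1
    · exact ih (fun j hj => hle j (Finset.mem_insert_of_mem hj))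
        (fun j hj => hpos j (Finset.mem_insert_of_mem hj)) h2 i hi

/-- If an integer quantum flow has value `QMC(N)`, then every
forward-crossing edge of every minimum cut is saturated: `f(v,w) = d(v,w)` and
`f(w,v) = 1`. -/
theorem int_flow_saturates_min_cut {V : Type*} [DecidableEq V]
    (E : Finset (V × V)) (hsymm : ∀ u v : V, (u, v) ∈ E → (v, u) ∈ E)
    (d : V × V → ℕ) (hdsymm : ∀ u v : V, d (u, v) = d (v, u))
    (hd2 : ∀ e ∈ E, 2 ≤ d e)
    (s t : V) (hst : s ≠ t)
    (f : V × V → ℕ)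
    (hpos : ∀ e ∈ E, 1 ≤ f e)
    (hcap : ∀ e ∈ E, f e * f (e.2, e.1) ≤ d e)
    (hcons : ∀ v : V, v ≠ s → v ≠ t →
      ∏ e ∈ E.filter (fun e => e.2 = v), f e = ∏ e ∈ E.filter (fun e => e.1 = v), f e)
    (hval : (∏ e ∈ E.filter (fun e => e.1 = s), (f e : ℚ)) /
        (∏ e ∈ E.filter (fun e => e.2 = s), (f e : ℚ)) = (QMC E d s t : ℚ)) :
    ∀ S : Finset V, s ∈ S → t ∉ S →
      (∏ e ∈ E.filter (fun e => e.1 ∈ S ∧ e.2 ∉ S), d e) = QMC E d s t →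
      ∀ v w : V, (v, w) ∈ E → v ∈ S → w ∉ S →
        f (v, w) = d (v, w) ∧ f (w, v) = 1 := by
  classical
  intro S hs ht hD v w hvw hvS hwS
  set Fw := E.filter (fun e => e.1 ∈ S ∧ e.2 ∉ S) with hFw
  set Bw := E.filter (fun e => e.1 ∉ S ∧ e.2 ∈ S) with hBw
  -- positivity facts
  have hfpos : ∀ e ∈ E, 0 < f e := fun e he => hpos e he
  -- B as a product over forward edges of reversed f
  have hBprod : ∏ e ∈ Bw, f e = ∏ e ∈ Fw, f (e.2, e.1) := by
    refine Finset.prod_nbij' (fun e => (e.2, e.1)) (fun e => (e.2, e.1)) ?_ ?_ ?_ ?_ ?_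
    · intro e he
      simp only [hBw, hFw, Finset.mem_filter] at he ⊢
      exact ⟨hsymm e.1 e.2 he.1, he.2.2, he.2.1⟩
    · intro e he
      simp only [hBw, hFw, Finset.mem_filter] at he ⊢
      exact ⟨hsymm e.1 e.2 he.1, he.2.2, he.2.1⟩
    · intro e _; rfl
    · intro e _; rfl
    · intro e _; rfl
  -- splitting the product over edges leaving S
  have hsplit1 : ∏ v' ∈ S, ∏ e ∈ E.filter (fun e => e.1 = v'), f e
      = (∏ e ∈ E.filter (fun e => e.1 ∈ S ∧ e.2 ∈ S), f e) * ∏ e ∈ Fw, f e := by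
    have hmaps : ∀ e ∈ E.filter (fun e : V × V => e.1 ∈ S), e.1 ∈ S :=
      fun e he => (Finset.mem_filter.mp he).2
    have hfib := Finset.prod_fiberwise_of_maps_to hmaps f
    have hL : ∏ v' ∈ S, ∏ e ∈ E.filter (fun e => e.1 = v'), f e
        = ∏ e ∈ E.filter (fun e : V × V => e.1 ∈ S), f e := by
      rw [← hfib]
      refine Finset.prod_congr rfl fun v' hv' => ?_
      refine Finset.prod_congr ?_ fun _ _ => rfl
      rw [Finset.filter_filter]
      apply Finset.filter_congr
      intro e _
      constructor
      · exact fun h => ⟨by rw [h]; exact hv', h⟩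
      · exact fun h => h.2
    rw [hL, ← Finset.prod_filter_mul_prod_filter_not
      (E.filter (fun e : V × V => e.1 ∈ S)) (fun e => e.2 ∈ S), Finset.filter_filter,
      Finset.filter_filter]
  have hsplit2 : ∏ v' ∈ S, ∏ e ∈ E.filter (fun e => e.2 = v'), f e
      = (∏ e ∈ E.filter (fun e => e.1 ∈ S ∧ e.2 ∈ S), f e) * ∏ e ∈ Bw, f e := by
    have hmaps : ∀ e ∈ E.filter (fun e : V × V => e.2 ∈ S), e.2 ∈ S :=
      fun e he => (Finset.mem_filter.mp he).2
    have hfib := Finset.prod_fiberwise_of_maps_to hmaps f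
    have hL : ∏ v' ∈ S, ∏ e ∈ E.filter (fun e => e.2 = v'), f e
        = ∏ e ∈ E.filter (fun e : V × V => e.2 ∈ S), f e := by
      rw [← hfib]
      refine Finset.prod_congr rfl fun v' hv' => ?_
      refine Finset.prod_congr ?_ fun _ _ => rfl
      rw [Finset.filter_filter]
      apply Finset.filter_congr
      intro e _
      constructor
      · exact fun h => ⟨by rw [h]; exact hv', h⟩
      · exact fun h => h.2
    rw [hL, ← Finset.prod_filter_mul_prod_filter_not
      (E.filter (fun e : V × V => e.2 ∈ S)) (fun e => e.1 ∈ S), Finset.filter_filter,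
      Finset.filter_filter]
    congr 1
    · apply Finset.prod_congr _ fun _ _ => rfl
      apply Finset.filter_congr
      intro e _
      exact ⟨fun h => ⟨h.2, h.1⟩, fun h => ⟨h.2, h.1⟩⟩
    · rw [hBw]
      apply Finset.prod_congr _ fun _ _ => rfl
      apply Finset.filter_congr
      intro e _
      exact ⟨fun h => ⟨h.2, h.1⟩, fun h => ⟨h.2, h.1⟩⟩
  -- telescoping with conservation
  have htel : (∏ v' ∈ S, ∏ e ∈ E.filter (fun e => e.2 = v'), f e)
        * (∏ e ∈ E.filter (fun e => e.1 = s), f e)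
      = (∏ v' ∈ S, ∏ e ∈ E.filter (fun e => e.1 = v'), f e)
        * (∏ e ∈ E.filter (fun e => e.2 = s), f e) := by
    rw [← Finset.prod_erase_mul S _ hs, ← Finset.prod_erase_mul S (fun v' =>
      ∏ e ∈ E.filter (fun e => e.1 = v'), f e) hs]
    have hc : ∀ v' ∈ S.erase s, (∏ e ∈ E.filter (fun e => e.2 = v'), f e)
        = ∏ e ∈ E.filter (fun e => e.1 = v'), f e := by
      intro v' hv'
      have h1 : v' ≠ s := (Finset.mem_erase.mp hv').1
      have h2 : v' ≠ t := fun h => ht (h ▸ (Finset.mem_erase.mp hv').2)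
      exact hcons v' h1 h2
    rw [Finset.prod_congr rfl hc]
    ring
  rw [hsplit1, hsplit2] at htel
  have hApos : 0 < ∏ e ∈ E.filter (fun e => e.1 ∈ S ∧ e.2 ∈ S), f e :=
    Finset.prod_pos fun e he => hfpos e (Finset.mem_filter.mp he).1
  have hkey : (∏ e ∈ Bw, f e) * (∏ e ∈ E.filter (fun e => e.1 = s), f e)
      = (∏ e ∈ Fw, f e) * (∏ e ∈ E.filter (fun e => e.2 = s), f e) := by
    apply Nat.eq_of_mul_eq_mul_left hApos
    calc (∏ e ∈ E.filter (fun e => e.1 ∈ S ∧ e.2 ∈ S), f e) *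
          ((∏ e ∈ Bw, f e) * (∏ e ∈ E.filter (fun e => e.1 = s), f e))
        = ((∏ e ∈ E.filter (fun e => e.1 ∈ S ∧ e.2 ∈ S), f e) * (∏ e ∈ Bw, f e))
          * (∏ e ∈ E.filter (fun e => e.1 = s), f e) := by ring
      _ = ((∏ e ∈ E.filter (fun e => e.1 ∈ S ∧ e.2 ∈ S), f e) * (∏ e ∈ Fw, f e))
          * (∏ e ∈ E.filter (fun e => e.2 = s), f e) := htel
      _ = _ := by ring
  -- value of the flow: Out_s = QMC * In_s
  have hInpos : 0 < ∏ e ∈ E.filter (fun e => e.2 = s), f e :=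
    Finset.prod_pos fun e he => hfpos e (Finset.mem_filter.mp he).1
  have hOut : (∏ e ∈ E.filter (fun e => e.1 = s), f e)
      = QMC E d s t * ∏ e ∈ E.filter (fun e => e.2 = s), f e := by
    have hInQ : (∏ e ∈ E.filter (fun e => e.2 = s), (f e : ℚ)) ≠ 0 := by
      rw [← Nat.cast_prod]
      exact_mod_cast hInpos.ne'
    rw [div_eq_iff hInQ] at hval
    have : ((∏ e ∈ E.filter (fun e => e.1 = s), f e : ℕ) : ℚ)
        = ((QMC E d s t * ∏ e ∈ E.filter (fun e => e.2 = s), f e : ℕ) : ℚ) := by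
      push_cast
      rw [hval]
    exact_mod_cast this
  -- F = QMC * B
  have hF : (∏ e ∈ Fw, f e) = QMC E d s t * ∏ e ∈ Bw, f e := by
    have := hkey
    rw [hOut] at this
    -- B * (Q * In) = F * In
    have h' : (∏ e ∈ Bw, f e) * QMC E d s t * (∏ e ∈ E.filter (fun e => e.2 = s), f e)
        = (∏ e ∈ Fw, f e) * (∏ e ∈ E.filter (fun e => e.2 = s), f e) := by
      rw [← this]; ring
    have h'' := Nat.eq_of_mul_eq_mul_right hInpos h'
    rw [← h'', Nat.mul_comm]
  -- capacity bound: F * B ≤ D = QMC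
  have hFB : (∏ e ∈ Fw, f e) * (∏ e ∈ Bw, f e) = ∏ e ∈ Fw, f e * f (e.2, e.1) := by
    rw [hBprod, ← Finset.prod_mul_distrib]
  have hFwE : ∀ e ∈ Fw, e ∈ E := fun e he => (Finset.mem_filter.mp he).1
  have hle : (∏ e ∈ Fw, f e * f (e.2, e.1)) ≤ ∏ e ∈ Fw, d e :=
    Finset.prod_le_prod (fun e _ => Nat.zero_le _) (fun e he => hcap e (hFwE e he))
  have hQpos : 0 < QMC E d s t := by
    rw [← hD]
    exact Finset.prod_pos fun e he => lt_of_lt_of_le two_pos (hd2 e (hFwE e he))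
  have hBge : 1 ≤ ∏ e ∈ Bw, f e :=
    Finset.one_le_prod' fun e he => hpos e (Finset.mem_filter.mp he).1
  -- B = 1
  have hB1 : (∏ e ∈ Bw, f e) = 1 := by
    have h1 : (∏ e ∈ Fw, f e) * (∏ e ∈ Bw, f e) ≤ QMC E d s t := by
      rw [hFB]; rw [← hD]; exact hle
    rw [hF] at h1
    by_contra hne
    have h2 : 2 ≤ ∏ e ∈ Bw, f e := by omega
    have h4 : QMC E d s t < QMC E d s t * (∏ e ∈ Bw, f e) * ∏ e ∈ Bw, f e := by
      calc QMC E d s t < QMC E d s t * 2 := by omega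
        _ ≤ QMC E d s t * ∏ e ∈ Bw, f e := Nat.mul_le_mul_left _ h2
        _ = QMC E d s t * (∏ e ∈ Bw, f e) * 1 := (mul_one _).symm
        _ ≤ QMC E d s t * (∏ e ∈ Bw, f e) * ∏ e ∈ Bw, f e :=
            Nat.mul_le_mul_left _ (by omega)
    exact absurd h1 (Nat.not_le.mpr h4)
  -- products of f e * f(rev e) equal products of d
  have hprodeq : (∏ e ∈ Fw, f e * f (e.2, e.1)) = ∏ e ∈ Fw, d e := by
    have : (∏ e ∈ Fw, f e * f (e.2, e.1)) = QMC E d s t := by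
      rw [← hFB, hF, hB1]; ring
    rw [this, hD]
  have heach : ∀ e ∈ Fw, f e * f (e.2, e.1) = d e :=
    aux_prod_eq_of_le (fun e he => hcap e (hFwE e he))
      (fun e he => Nat.mul_pos (hfpos e (hFwE e he))
        (hfpos _ (hsymm e.1 e.2 (hFwE e he)))) hprodeq
  have hBeach : ∀ e ∈ Bw, f e = 1 :=
    (Finset.prod_eq_one_iff_of_one_le' fun e he =>
      hpos e (Finset.mem_filter.mp he).1).mp hB1
  -- conclusion
  have hvwFw : (v, w) ∈ Fw := by
    rw [hFw, Finset.mem_filter]; exact ⟨hvw, hvS, hwS⟩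
  have hwvBw : (w, v) ∈ Bw := by
    rw [hBw, Finset.mem_filter]; exact ⟨hsymm v w hvw, hwS, hvS⟩
  have hrev1 : f (w, v) = 1 := hBeach (w, v) hwvBw
  have hmul : f (v, w) * f (w, v) = d (v, w) := heach (v, w) hvwFw
  rw [hrev1, mul_one] at hmul
  exact ⟨hmul, hrev1⟩
end
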